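/- arXiv:1910.06833 — 14 statements merged into one kernel-verified Lean document; each statement's English description precedes it below -/
import Mathlib

section
/- Let η, λ, μ be real numbers. In the complex numbers set q = exp(iη), z = exp(i(η+λ)), w = exp(−i(η+λ)), t = exp(iμ) and ν = 1/(2i·exp(iμ/3)). Then: (i) ν³·(z − w)·(qz − q⁻¹t)·(qt − q⁻¹w) = sin(λ+η)·sin((λ+3η+μ)/2)·sin((λ+3η−μ)/2), and (ii) ν³·[(z − w)·(q⁻¹z − qt)·(q⁻¹t − qw) + (q² − q⁻²)³·exp(iμ)] = sin(2η)³ + sin(λ+η)·sin((λ−η+μ)/2)·sin((λ−η−μ)/2), both as equalities in ℂ (the right-hand sides being real numbers coerced into ℂ). -/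
noncomputable def ee (x : ℝ) : ℂ := Complex.exp (x * Complex.I)

lemma ee_int_mul (i : ℤ) (x : ℝ) : ee (i * x) = ee x ^ i := by
  simp only [ee]
  rw [show ((i : ℝ) * x : ℝ) * Complex.I = (i : ℂ) * (x * Complex.I) by push_cast; ring]
  exact Complex.exp_int_mul _ i

lemma ee_add (x y : ℝ) : ee (x + y) = ee x * ee y := by
  simp [ee, add_mul, Complex.exp_add]

lemma ee_neg (x : ℝ) : ee (-x) = (ee x)⁻¹ := by
  simp [ee, ← Complex.exp_neg]

lemma ee_ne (x : ℝ) : ee x ≠ 0 := Complex.exp_ne_zero _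

lemma deco (x η lam μ : ℝ) (i j k : ℤ) (hx : x = i * (η/2) + j * (lam/2) + k * (μ/2)) :
    ee x = ee (η/2) ^ i * ee (lam/2) ^ j * ee (μ/2) ^ k := by
  rw [hx, ee_add, ee_add, ee_int_mul, ee_int_mul, ee_int_mul]

lemma sin_ee (x : ℝ) : (Real.sin x : ℂ) = ((ee x)⁻¹ - ee x) * Complex.I / 2 := by
  rw [Complex.ofReal_sin, ← ee_neg]
  simp only [ee]
  rw [Complex.sin]
  push_cast
  ring

set_option maxHeartbeats 1000000 in
/-- Explicit trigonometric values of the 20V weights ω0 and ω3. -/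
theorem stmt1 (η lam μ : ℝ) (q z w t ν : ℂ)
    (hq : q = Complex.exp (Complex.I * η))
    (hz : z = Complex.exp (Complex.I * (η + lam)))
    (hw : w = Complex.exp (-(Complex.I * (η + lam))))
    (ht : t = Complex.exp (Complex.I * μ))
    (hν : ν = 1 / (2 * Complex.I * Complex.exp (Complex.I * μ / 3))) :
    ν ^ 3 * (z - w) * (q * z - q⁻¹ * t) * (q * t - q⁻¹ * w)
      = ((Real.sin (lam + η) * Real.sin ((lam + 3 * η + μ) / 2)
          * Real.sin ((lam + 3 * η - μ) / 2) : ℝ) : ℂ) ∧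
    ν ^ 3 * ((z - w) * (q⁻¹ * z - q * t) * (q⁻¹ * t - q * w)
        + (q ^ 2 - (q ^ 2)⁻¹) ^ 3 * Complex.exp (Complex.I * μ))
      = (((Real.sin (2 * η)) ^ 3 + Real.sin (lam + η) * Real.sin ((lam - η + μ) / 2)
          * Real.sin ((lam - η - μ) / 2) : ℝ) : ℂ) := by
  have ha : ee (η/2) ≠ 0 := ee_ne _
  have hb : ee (lam/2) ≠ 0 := ee_ne _
  have hc : ee (μ/2) ≠ 0 := ee_ne _
  have hq' : q = ee (η/2) ^ 2 := by
    rw [hq, show Complex.I * (η:ℂ) = (η:ℂ) * Complex.I from mul_comm _ _,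
      show Complex.exp ((η:ℂ) * Complex.I) = ee η from rfl,
      deco η η lam μ 2 0 0 (by ring)]
    simp [zpow_ofNat, zpow_neg, zpow_one, zpow_zero]
  have hz' : z = ee (η/2) ^ 2 * ee (lam/2) ^ 2 := by
    rw [hz, show Complex.I * ((η:ℂ) + lam) = ((η + lam : ℝ) : ℂ) * Complex.I by
        push_cast; ring,
      show Complex.exp (((η + lam : ℝ):ℂ) * Complex.I) = ee (η + lam) from rfl,
      deco (η + lam) η lam μ 2 2 0 (by ring)]
    simp [zpow_ofNat, zpow_neg, zpow_one, zpow_zero]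
  have hw' : w = (ee (η/2) ^ 2 * ee (lam/2) ^ 2)⁻¹ := by
    rw [hw, Complex.exp_neg, ← hz, hz']
  have ht' : t = ee (μ/2) ^ 2 := by
    rw [ht, show Complex.I * (μ:ℂ) = (μ:ℂ) * Complex.I from mul_comm _ _,
      show Complex.exp ((μ:ℂ) * Complex.I) = ee μ from rfl,
      deco μ η lam μ 0 0 2 (by ring)]
    simp [zpow_ofNat, zpow_neg, zpow_one, zpow_zero]
  have hI2 : Complex.I ^ 2 = -1 := Complex.I_sq
  have hI3 : Complex.I ^ 3 = -Complex.I := by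
    rw [pow_succ, hI2]; ring
  have hν3 : ν ^ 3 = Complex.I / (8 * ee (μ/2) ^ 2) := by
    rw [hν]
    have h3 : Complex.exp (Complex.I * ↑μ / 3) ^ 3 = ee (μ/2) ^ 2 := by
      rw [← Complex.exp_nat_mul,
        show ((3:ℕ) : ℂ) * (Complex.I * ↑μ / 3) = (μ:ℂ) * Complex.I by push_cast; ring,
        show Complex.exp ((μ:ℂ) * Complex.I) = ee μ from rfl,
        deco μ η lam μ 0 0 2 (by ring)]
      simp [zpow_ofNat, zpow_neg, zpow_one, zpow_zero]
    rw [div_pow, one_pow, mul_pow, mul_pow, h3, hI3]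
    rw [div_eq_div_iff (by simp [hc, Complex.I_ne_zero]) (by simp [hc])]
    linear_combination (8 * ee (μ/2) ^ 2) * hI2
  have e1 : ee (lam + η) = ee (η/2) ^ 2 * ee (lam/2) ^ 2 := by
    rw [deco (lam + η) η lam μ 2 2 0 (by ring)]; simp [zpow_ofNat, zpow_neg, zpow_one, zpow_zero]
  have e2 : ee ((lam + 3 * η + μ) / 2) = ee (η/2) ^ 3 * ee (lam/2) * ee (μ/2) := by
    rw [deco _ η lam μ 3 1 1 (by ring)]; simp [zpow_ofNat, zpow_neg, zpow_one, zpow_zero]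
  have e3 : ee ((lam + 3 * η - μ) / 2) = ee (η/2) ^ 3 * ee (lam/2) * (ee (μ/2))⁻¹ := by
    rw [deco _ η lam μ 3 1 (-1) (by ring)]; simp [zpow_ofNat, zpow_neg, zpow_one, zpow_zero]
  have e4 : ee (2 * η) = ee (η/2) ^ 4 := by
    rw [deco _ η lam μ 4 0 0 (by ring)]; simp [zpow_ofNat, zpow_neg, zpow_one, zpow_zero]
  have e5 : ee ((lam - η + μ) / 2) = (ee (η/2))⁻¹ * ee (lam/2) * ee (μ/2) := by
    rw [deco _ η lam μ (-1) 1 1 (by ring)]; simp [zpow_ofNat, zpow_neg, zpow_one, zpow_zero]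
  have e6 : ee ((lam - η - μ) / 2) = (ee (η/2))⁻¹ * ee (lam/2) * (ee (μ/2))⁻¹ := by
    rw [deco _ η lam μ (-1) 1 (-1) (by ring)]; simp [zpow_ofNat, zpow_neg, zpow_one, zpow_zero]
  have hexpμ : Complex.exp (Complex.I * ↑μ) = ee (μ/2) ^ 2 := by
    rw [show Complex.I * (μ:ℂ) = (μ:ℂ) * Complex.I from mul_comm _ _,
      show Complex.exp ((μ:ℂ) * Complex.I) = ee μ from rfl,
      deco μ η lam μ 0 0 2 (by ring)]
    simp [zpow_ofNat, zpow_neg, zpow_one, zpow_zero]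
  have hI4 : Complex.I ^ 4 = 1 := Complex.I_pow_four
  have hIne : Complex.I ≠ 0 := Complex.I_ne_zero
  constructor
  · rw [hν3, hq', hz', hw', ht']
    simp only [Complex.ofReal_mul]
    rw [sin_ee, sin_ee, sin_ee, e1, e2, e3]
    field_simp
    ring_nf
    simp only [hI2, hI3, hI4]
    ring
  · have hν3' : ν ^ 3 = Complex.I * ((ee (μ/2))⁻¹) ^ 2 / 8 := by
      rw [hν3, inv_pow]
      field_simp
    rw [hν3', hq', hz', hw', ht', hexpμ]
    simp only [Complex.ofReal_mul, Complex.ofReal_add, Complex.ofReal_pow]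
    rw [sin_ee, sin_ee, sin_ee, sin_ee, e1, e4, e5, e6]
    simp only [mul_inv, ← inv_pow, inv_inv]
    generalize hA' : (ee (η/2))⁻¹ = a'
    generalize hB' : (ee (lam/2))⁻¹ = b'
    generalize hC' : (ee (μ/2))⁻¹ = c'
    have haa : ee (η/2) * a' = 1 := by rw [← hA']; exact mul_inv_cancel₀ ha
    have hbb : ee (lam/2) * b' = 1 := by rw [← hB']; exact mul_inv_cancel₀ hb
    have hcc : ee (μ/2) * c' = 1 := by rw [← hC']; exact mul_inv_cancel₀ hc
    have hI2p : Complex.I ^ 2 = -1 := Complex.I_sq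
    generalize hA : ee (η/2) = a at haa ⊢
    generalize hB : ee (lam/2) = b at hbb ⊢
    generalize hC : ee (μ/2) = c at hcc ⊢
    linear_combination ((-1/8 : ℂ) * b' ^ 4 * c * c' * Complex.I ^ 3 + (-1/8 : ℂ) * b' ^ 4 * c ^ 2 * c' ^ 2 * Complex.I + (1/8 : ℂ) * b ^ 4 * c * c' * Complex.I ^ 3 + (1/8 : ℂ) * b ^ 4 * c ^ 2 * c' ^ 2 * Complex.I + (1/8 : ℂ) * a' ^ 2 * b' ^ 2 * c ^ 4 * c' ^ 2 * Complex.I + (1/8 : ℂ) * a' ^ 2 * b * b' ^ 3 * c' ^ 2 * Complex.I ^ 3 + (1/8 : ℂ) * a' ^ 2 * b * b' ^ 3 * c ^ 2 * Complex.I ^ 3 + (1/8 : ℂ) * a' ^ 2 * b ^ 2 * b' ^ 4 * c' ^ 2 * Complex.I + (3/8 : ℂ) * a' ^ 4 * Complex.I ^ 3 + (3/8 : ℂ) * a' ^ 4 * c ^ 2 * c' ^ 2 * Complex.I + (-1/8 : ℂ) * a' ^ 4 * b ^ 2 * b' ^ 2 * c ^ 2 * c' ^ 2 * Complex.I + (-1/8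 : ℂ) * a * a' * b' ^ 4 * c * c' * Complex.I ^ 3 + (-1/8 : ℂ) * a * a' * b' ^ 4 * c ^ 2 * c' ^ 2 * Complex.I + (1/8 : ℂ) * a * a' * b ^ 4 * c * c' * Complex.I ^ 3 + (1/8 : ℂ) * a * a' * b ^ 4 * c ^ 2 * c' ^ 2 * Complex.I + (1/8 : ℂ) * a * a' ^ 3 * b' ^ 2 * c ^ 4 * c' ^ 2 * Complex.I + (1/8 : ℂ) * a * a' ^ 3 * b ^ 2 * b' ^ 4 * c' ^ 2 * Complex.I + (3/8 : ℂ) * a * a' ^ 5 * Complex.I ^ 3 + (3/8 : ℂ) * a * a' ^ 5 * c ^ 2 * c' ^ 2 * Complex.I + (-1/8 : ℂ) * a * a' ^ 5 * b ^ 2 * b' ^ 2 * c ^ 2 * c' ^ 2 * Complex.I + (-1/8 : ℂ) * a ^ 2 * b ^ 2 * c ^ 4 * c' ^ 2 * Complex.I + (-1/8 : ℂ) * a ^ 2 * b ^ 3 * b' * c' ^ 2 * Complex.I ^ 3 + (-1/8 : ℂ) * a ^ 2 * b ^ 3 * b' * c ^ 2 * Complex.I ^ 3 + (-1/8 : ℂ)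 * a ^ 2 * b ^ 4 * b' ^ 2 * c' ^ 2 * Complex.I + (-1/8 : ℂ) * a ^ 2 * a' ^ 2 * b' ^ 4 * c ^ 2 * c' ^ 2 * Complex.I + (1/8 : ℂ) * a ^ 2 * a' ^ 2 * b ^ 4 * c ^ 2 * c' ^ 2 * Complex.I + (1/8 : ℂ) * a ^ 2 * a' ^ 4 * b ^ 2 * b' ^ 4 * c' ^ 2 * Complex.I + (3/8 : ℂ) * a ^ 2 * a' ^ 6 * Complex.I ^ 3 + (3/8 : ℂ) * a ^ 2 * a' ^ 6 * c ^ 2 * c' ^ 2 * Complex.I + (-1/8 : ℂ) * a ^ 3 * a' * b ^ 2 * c ^ 4 * c' ^ 2 * Complex.I + (-1/8 : ℂ) * a ^ 3 * a' * b ^ 4 * b' ^ 2 * c' ^ 2 * Complex.I + (-1/8 : ℂ) * a ^ 3 * a' ^ 3 * b' ^ 4 * c ^ 2 * c' ^ 2 * Complex.I + (1/8 : ℂ) * a ^ 3 * a' ^ 3 * b ^ 4 * c ^ 2 * c' ^ 2 * Complex.I + (1/8 : ℂ) * a ^ 3 * a' ^ 5 * b ^ 2 * b' ^ 4 * c' ^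 2 * Complex.I + (3/8 : ℂ) * a ^ 3 * a' ^ 7 * Complex.I ^ 3 + (3/8 : ℂ) * a ^ 3 * a' ^ 7 * c ^ 2 * c' ^ 2 * Complex.I + (-3/8 : ℂ) * a ^ 4 * Complex.I ^ 3 + (-3/8 : ℂ) * a ^ 4 * c ^ 2 * c' ^ 2 * Complex.I + (1/8 : ℂ) * a ^ 4 * b ^ 2 * b' ^ 2 * c ^ 2 * c' ^ 2 * Complex.I + (-1/8 : ℂ) * a ^ 4 * a' ^ 2 * b ^ 4 * b' ^ 2 * c' ^ 2 * Complex.I + (-3/8 : ℂ) * a ^ 5 * a' * Complex.I ^ 3 + (-3/8 : ℂ) * a ^ 5 * a' * c ^ 2 * c' ^ 2 * Complex.I + (1/8 : ℂ) * a ^ 5 * a' * b ^ 2 * b' ^ 2 * c ^ 2 * c' ^ 2 * Complex.I + (-1/8 : ℂ) * a ^ 5 * a' ^ 3 * b ^ 4 * b' ^ 2 * c' ^ 2 * Complex.I + (-3/8 : ℂ) * a ^ 6 * a' ^ 2 * Complex.I ^ 3 + (-3/8 : ℂ) * a ^ 6 * a' ^ 2 * c ^ 2 * c' ^ 2 * Complex.I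 + (-3/8 : ℂ) * a ^ 7 * a' ^ 3 * Complex.I ^ 3 + (-3/8 : ℂ) * a ^ 7 * a' ^ 3 * c ^ 2 * c' ^ 2 * Complex.I) * haa + ((1/8 : ℂ) * a' ^ 2 * b' ^ 2 * c' ^ 2 * Complex.I + (1/8 : ℂ) * a' ^ 2 * b' ^ 2 * c' ^ 2 * Complex.I ^ 3 + (1/8 : ℂ) * a' ^ 2 * b' ^ 2 * c ^ 2 * Complex.I ^ 3 + (1/8 : ℂ) * a' ^ 2 * b * b' ^ 3 * c' ^ 2 * Complex.I + (-1/8 : ℂ) * a' ^ 4 * c * c' * Complex.I ^ 3 + (-1/8 : ℂ) * a' ^ 4 * c ^ 2 * c' ^ 2 * Complex.I + (-1/8 : ℂ) * a' ^ 4 * b * b' * c * c' * Complex.I ^ 3 + (-1/8 : ℂ) * a' ^ 4 * b * b' * c ^ 2 * c' ^ 2 * Complex.I + (-1/8 : ℂ) * a ^ 2 * b ^ 2 * c' ^ 2 * Complex.I + (-1/8 : ℂ) * a ^ 2 * b ^ 2 * c' ^ 2 * Complex.I ^ 3 + (-1/8 : ℂ) * a ^ 2 * b ^ 2 * c ^ 2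 * Complex.I ^ 3 + (-1/8 : ℂ) * a ^ 2 * b ^ 3 * b' * c' ^ 2 * Complex.I + (1/8 : ℂ) * a ^ 4 * c * c' * Complex.I ^ 3 + (1/8 : ℂ) * a ^ 4 * c ^ 2 * c' ^ 2 * Complex.I + (1/8 : ℂ) * a ^ 4 * b * b' * c * c' * Complex.I ^ 3 + (1/8 : ℂ) * a ^ 4 * b * b' * c ^ 2 * c' ^ 2 * Complex.I) * hbb + ((-1/8 : ℂ) * b' ^ 4 * Complex.I + (-1/8 : ℂ) * b' ^ 4 * Complex.I ^ 3 + (-1/8 : ℂ) * b' ^ 4 * c * c' * Complex.I + (1/8 : ℂ) * b ^ 4 * Complex.I + (1/8 : ℂ) * b ^ 4 * Complex.I ^ 3 + (1/8 : ℂ) * b ^ 4 * c * c' * Complex.I + (1/8 : ℂ) * a' ^ 2 * b' ^ 2 * c ^ 2 * Complex.I + (1/8 : ℂ) * a' ^ 2 * b' ^ 2 * c ^ 3 * c' * Complex.I + (1/4 : ℂ) * a' ^ 4 * Complex.I + (-1/8 : ℂ) * a' ^ 4 * Complex.I ^ 3 + (1/4 : ℂ) * a' ^ 4 * c * c' * Complex.I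 + (-1/8 : ℂ) * a' ^ 12 * Complex.I + (-1/8 : ℂ) * a' ^ 12 * c * c' * Complex.I + (-1/8 : ℂ) * a ^ 2 * b ^ 2 * c ^ 2 * Complex.I + (-1/8 : ℂ) * a ^ 2 * b ^ 2 * c ^ 3 * c' * Complex.I + (-1/4 : ℂ) * a ^ 4 * Complex.I + (1/8 : ℂ) * a ^ 4 * Complex.I ^ 3 + (-1/4 : ℂ) * a ^ 4 * c * c' * Complex.I + (1/8 : ℂ) * a ^ 12 * Complex.I + (1/8 : ℂ) * a ^ 12 * c * c' * Complex.I) * hcc + ((-1/8 : ℂ) * b' ^ 4 * Complex.I + (1/8 : ℂ) * b ^ 4 * Complex.I + (1/8 : ℂ) * a' ^ 2 * b' ^ 2 * c' ^ 2 * Complex.I + (1/8 : ℂ) * a' ^ 2 * b' ^ 2 * c ^ 2 * Complex.I + (1/4 : ℂ) * a' ^ 4 * Complex.I + (-1/8 : ℂ) * a' ^ 12 * Complex.I + (-1/8 : ℂ) * a ^ 2 * b ^ 2 * c' ^ 2 * Complex.I + (-1/8 : ℂ) * a ^ 2 * b ^ 2 * c ^ 2 * Complex.I + (-1/4 : ℂ)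 * a ^ 4 * Complex.I + (1/8 : ℂ) * a ^ 12 * Complex.I) * hI2p
end

section
/- Let η, λ be real numbers with sin(2η) ≠ 0, sin(λ−η) ≠ 0 and sin(λ−3η) ≠ 0, and set μ = λ − 5η. Then for every nonzero real σ: (i) the denominator σ·sin(λ−η)·sin((λ−η−μ)/2) − sin(λ+η)·sin((λ−5η−μ)/2) equals σ·sin(λ−η)·sin(2η) and is nonzero; (ii) g(σ) := σ·sin(2η)·sin((λ+3η+μ)/2) / (σ·sin(λ−η)·sin((λ−η−μ)/2) − sin(λ+η)·sin((λ−5η−μ)/2)) equals 1; and (iii) τ(σ) := σ·(σ·sin(λ−η)·sin((λ+3η−μ)/2) − sin(λ+η)·sin((λ−η−μ)/2)) / (σ·sin(λ−η)·sin((λ−η−μ)/2) − sin(λ+η)·sin((λ−5η−μ)/2)) · sin((λ+3η+μ)/2)/sin((λ−η+μ)/2) equals (2cos(2η)·sin(λ−η)·σ − sin(λ+η)) / sin(λ−3η). -/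
/-!
At `μ = λ - 5η` every half-angle in `g` and `τ` collapses to a plain angle: `(λ - 5η - μ)/2 = 0`
kills the constant term of the denominator, which becomes `σ sin(λ - η) sin 2η`, while
`(λ + 3η + μ)/2 = λ - η` makes the numerator of `g` the same product. In `τ` the double-angle
formula `sin 4η = 2 sin 2η cos 2η` lets `σ sin(λ - η) sin 2η` cancel, and `(λ - η + μ)/2 = λ - 3η`
produces the remaining denominator.
-/

open Real

namespace TwentyVertex

variable (η lam σ : ℝ)

theorem refinementDenominator_eq :
    σ * sin (lam - η) * sin ((lam - η - (lam - 5*η))/2)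
        - sin (lam + η) * sin ((lam - 5*η - (lam - 5*η))/2)
      = σ * sin (lam - η) * sin (2*η) := by
  rw [show (lam - η - (lam - 5*η))/2 = 2*η by ring, sub_self, zero_div, sin_zero,
    mul_zero, sub_zero]

theorem refinementNumerator_eq :
    σ * sin (lam - η) * sin ((lam + 3*η - (lam - 5*η))/2)
        - sin (lam + η) * sin ((lam - η - (lam - 5*η))/2)
      = sin (2*η) * (2 * cos (2*η) * sin (lam - η) * σ - sin (lam + η)) := by
  rw [show (lam + 3*η - (lam - 5*η))/2 = 2*(2*η) by ring,
    show (lam - η - (lam - 5*η))/2 = 2*η by ring, sin_two_mul (2*η)]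
  ring

end TwentyVertex

open TwentyVertex in
theorem stmt3_general (η lam μ : ℝ)
    (h1 : Real.sin (2*η) ≠ 0) (h2 : Real.sin (lam - η) ≠ 0)
    (hμ : μ = lam - 5*η) (σ : ℝ) (hσ : σ ≠ 0)
    (D : ℝ) (hD : D = σ * Real.sin (lam - η) * Real.sin ((lam - η - μ)/2)
        - Real.sin (lam + η) * Real.sin ((lam - 5*η - μ)/2)) :
    D = σ * Real.sin (lam - η) * Real.sin (2*η) ∧ D ≠ 0 ∧
    σ * Real.sin (2*η) * Real.sin ((lam + 3*η + μ)/2) / D = 1 ∧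
    σ * (σ * Real.sin (lam - η) * Real.sin ((lam + 3*η - μ)/2)
        - Real.sin (lam + η) * Real.sin ((lam - η - μ)/2)) / D
      * (Real.sin ((lam + 3*η + μ)/2) / Real.sin ((lam - η + μ)/2))
      = (2 * Real.cos (2*η) * Real.sin (lam - η) * σ - Real.sin (lam + η))
        / Real.sin (lam - 3*η) := by
  subst hμ
  have hD_eq : D = σ * sin (lam - η) * sin (2*η) := hD.trans (refinementDenominator_eq η lam σ)
  have hD_ne : D ≠ 0 := hD_eq ▸ mul_ne_zero (mul_ne_zero hσ h2) h1
  rw [refinementNumerator_eq, show (lam + 3*η + (lam - 5*η))/2 = lam - η by ring,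
    show (lam - η + (lam - 5*η))/2 = lam - 3*η by ring]
  refine ⟨hD_eq, hD_ne, ?_, ?_⟩
  · rw [div_eq_one_iff_eq hD_ne, hD_eq]
    ring
  · rw [hD_eq]
    field_simp

/-- At μ = λ − 5η the correction factor g(σ) is 1 and τ(σ) is affine in σ. -/
theorem stmt3 (η lam μ : ℝ)
    (h1 : Real.sin (2*η) ≠ 0) (h2 : Real.sin (lam - η) ≠ 0) (h3 : Real.sin (lam - 3*η) ≠ 0)
    (hμ : μ = lam - 5*η) (σ : ℝ) (hσ : σ ≠ 0)
    (D : ℝ) (hD : D = σ * Real.sin (lam - η) * Real.sin ((lam - η - μ)/2)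
        - Real.sin (lam + η) * Real.sin ((lam - 5*η - μ)/2)) :
    D = σ * Real.sin (lam - η) * Real.sin (2*η) ∧ D ≠ 0 ∧
    σ * Real.sin (2*η) * Real.sin ((lam + 3*η + μ)/2) / D = 1 ∧
    σ * (σ * Real.sin (lam - η) * Real.sin ((lam + 3*η - μ)/2)
        - Real.sin (lam + η) * Real.sin ((lam - η - μ)/2)) / D
      * (Real.sin ((lam + 3*η + μ)/2) / Real.sin ((lam - η + μ)/2))
      = (2 * Real.cos (2*η) * Real.sin (lam - η) * σ - Real.sin (lam + η))
        / Real.sin (lam - 3*η) :=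
  stmt3_general η lam μ h1 h2 hμ σ hσ D hD
end

section
/- Let η, λ, μ be real numbers in the admissible range 0 < η < λ < π − η, η − λ < μ < λ − η, and let ξ ∈ (0, π − λ − η). Set σ(ξ) = sin(λ+η)·sin(ξ+λ−η) / (sin(λ−η)·sin(ξ+λ+η)). Then the denominator σ(ξ)·sin(λ−η)·sin((λ−η−μ)/2) − sin(λ+η)·sin((λ−5η−μ)/2) is nonzero, and σ(ξ)·(σ(ξ)·sin(λ−η)·sin((λ+3η−μ)/2) − sin(λ+η)·sin((λ−η−μ)/2)) / (σ(ξ)·sin(λ−η)·sin((λ−η−μ)/2) − sin(λ+η)·sin((λ−5η−μ)/2)) · sin((λ+3η+μ)/2)/sin((λ−η+μ)/2) = sin(λ+η)·sin((λ+3η+μ)/2)·sin(ξ+λ−η)·sin(ξ+(λ−η+μ)/2) / (sin(λ−η)·sin((λ−η+μ)/2)·sin(ξ+λ+η)·sin(ξ+(λ+3η+μ)/2)). -/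
private lemma ratio_aux (a b x y : ℝ) (hy : y ≠ 0) (hb : b ≠ 0) (ha : a ≠ 0) :
    (a * x / b) / (a * y / b) = x / y := by
  field_simp

private lemma sms (a b : ℝ) :
    Real.sin a * Real.sin b = (Real.cos (a - b) - Real.cos (a + b)) / 2 := by
  rw [Real.cos_sub, Real.cos_add]; ring

set_option maxHeartbeats 1000000 in
/-- Parametric form of τ(σ(ξ)) for the 20V model. -/
theorem stmt4 (η lam μ ξ : ℝ) (h1 : 0 < η) (h2 : η < lam) (h3 : lam < Real.pi - η)
    (h4 : η - lam < μ) (h5 : μ < lam - η)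
    (hξ : ξ ∈ Set.Ioo 0 (Real.pi - lam - η))
    (σ : ℝ) (hσ : σ = Real.sin (lam + η) * Real.sin (ξ + lam - η)
        / (Real.sin (lam - η) * Real.sin (ξ + lam + η))) :
    (σ * Real.sin (lam - η) * Real.sin ((lam - η - μ)/2)
        - Real.sin (lam + η) * Real.sin ((lam - 5*η - μ)/2)) ≠ 0 ∧
    σ * (σ * Real.sin (lam - η) * Real.sin ((lam + 3*η - μ)/2)
        - Real.sin (lam + η) * Real.sin ((lam - η - μ)/2))
      / (σ * Real.sin (lam - η) * Real.sin ((lam - η - μ)/2)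
        - Real.sin (lam + η) * Real.sin ((lam - 5*η - μ)/2))
      * (Real.sin ((lam + 3*η + μ)/2) / Real.sin ((lam - η + μ)/2))
      = Real.sin (lam + η) * Real.sin ((lam + 3*η + μ)/2) * Real.sin (ξ + lam - η)
          * Real.sin (ξ + (lam - η + μ)/2)
        / (Real.sin (lam - η) * Real.sin ((lam - η + μ)/2) * Real.sin (ξ + lam + η)
          * Real.sin (ξ + (lam + 3*η + μ)/2)) := by
  obtain ⟨hξ0, hξ1⟩ := hξ
  have pi_pos := Real.pi_pos
  have p1 : 0 < Real.sin (lam + η) :=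
    Real.sin_pos_of_pos_of_lt_pi (by linarith) (by linarith)
  have p2 : 0 < Real.sin (lam - η) :=
    Real.sin_pos_of_pos_of_lt_pi (by linarith) (by linarith)
  have p3 : 0 < Real.sin (ξ + lam + η) :=
    Real.sin_pos_of_pos_of_lt_pi (by linarith) (by linarith)
  have p4 : 0 < Real.sin (ξ + lam - η) :=
    Real.sin_pos_of_pos_of_lt_pi (by linarith) (by linarith)
  have p5 : 0 < Real.sin (2 * η) :=
    Real.sin_pos_of_pos_of_lt_pi (by linarith) (by linarith)
  have p6 : 0 < Real.sin (ξ + (lam + 3*η + μ)/2) :=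
    Real.sin_pos_of_pos_of_lt_pi (by linarith) (by linarith)
  have p7 : 0 < Real.sin ((lam - η + μ)/2) :=
    Real.sin_pos_of_pos_of_lt_pi (by linarith) (by linarith)
  have p8 : 0 < Real.sin (ξ + (lam - η + μ)/2) :=
    Real.sin_pos_of_pos_of_lt_pi (by linarith) (by linarith)
  -- key product-to-sum identities
  have key1 : Real.sin (ξ + lam - η) * Real.sin ((lam - η - μ)/2)
      - Real.sin (ξ + lam + η) * Real.sin ((lam - 5*η - μ)/2)
      = Real.sin (2 * η) * Real.sin (ξ + (lam + 3*η + μ)/2) := by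
    rw [sms, sms, sms,
      show ξ + lam - η - (lam - η - μ)/2 = ξ + (lam - η + μ)/2 by ring,
      show (2:ℝ) * η - (ξ + (lam + 3*η + μ)/2) = -(ξ + (lam - η + μ)/2) by ring,
      Real.cos_neg]
    ring_nf
  have key2 : Real.sin (ξ + lam - η) * Real.sin ((lam + 3*η - μ)/2)
      - Real.sin (ξ + lam + η) * Real.sin ((lam - η - μ)/2)
      = Real.sin (2 * η) * Real.sin (ξ + (lam - η + μ)/2) := by
    rw [sms, sms, sms,
      show ξ + lam - η - (lam + 3*η - μ)/2 = ξ + (lam - 5*η + μ)/2 by ring,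
      show (2:ℝ) * η - (ξ + (lam - η + μ)/2) = -(ξ + (lam - 5*η + μ)/2) by ring,
      Real.cos_neg]
    ring_nf
  have hD : σ * Real.sin (lam - η) * Real.sin ((lam - η - μ)/2)
      - Real.sin (lam + η) * Real.sin ((lam - 5*η - μ)/2)
      = Real.sin (lam + η) * (Real.sin (2 * η) * Real.sin (ξ + (lam + 3*η + μ)/2))
          / Real.sin (ξ + lam + η) := by
    rw [hσ, ← key1]; field_simp
  have hN : σ * Real.sin (lam - η) * Real.sin ((lam + 3*η - μ)/2)
      - Real.sin (lam + η) * Real.sin ((lam - η - μ)/2)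
      = Real.sin (lam + η) * (Real.sin (2 * η) * Real.sin (ξ + (lam - η + μ)/2))
          / Real.sin (ξ + lam + η) := by
    rw [hσ, ← key2]; field_simp
  have hDne : σ * Real.sin (lam - η) * Real.sin ((lam - η - μ)/2)
      - Real.sin (lam + η) * Real.sin ((lam - 5*η - μ)/2) ≠ 0 := by
    rw [hD]; positivity
  refine ⟨hDne, ?_⟩
  rw [mul_div_assoc, hD, hN,
    ratio_aux _ _ _ _ (mul_ne_zero p5.ne' p6.ne') p3.ne' p1.ne',
    mul_div_mul_left _ _ p5.ne']
  rw [hσ]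
  field_simp [p1.ne', p2.ne', p3.ne', p5.ne', p6.ne', p7.ne', p8.ne']
end

section
/- Let η, λ, μ be real numbers in the admissible range 0 < η < λ < π − η, η − λ < μ < λ − η, and let ξ ∈ (0, π − λ − η). Set σ(ξ) = sin(λ+η)·sin(ξ+λ−η) / (sin(λ−η)·sin(ξ+λ+η)). Then the denominator σ(ξ)·sin(λ−η)·sin((λ−η−μ)/2) − sin(λ+η)·sin((λ−5η−μ)/2) is nonzero, and σ(ξ)·sin(2η)·sin((λ+3η+μ)/2) / (σ(ξ)·sin(λ−η)·sin((λ−η−μ)/2) − sin(λ+η)·sin((λ−5η−μ)/2)) = sin(ξ+λ−η)·sin((λ+3η+μ)/2) / (sin(λ−η)·sin(ξ+(λ+3η+μ)/2)). -/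
/-!
Write `x = ξ + λ` and `u = (λ - η - μ)/2`, so that `(λ - 5η - μ)/2 = u - 2η` and
`ξ + (λ + 3η + μ)/2 = x + η - u`. Then `σ sin(λ - η) = sin(λ + η) sin(x - η) / sin(x + η)`, and the
identity `sin(x - η) sin u - sin(x + η) sin(u - 2η) = sin 2η sin(x + η - u)` turns the denominator
of `g(σ)` into `sin(λ + η) sin 2η sin(ξ + (λ + 3η + μ)/2) / sin(ξ + λ + η)`. In the admissible range
every sine occurring here has its argument in `(0, π)`, so the denominator is positive and the
common factors cancel.
-/

open Real

theorem sin_sub_mul_sin_sub_sin_add_mul_sin_sub_two_mul (x e u : ℝ) :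
    sin (x - e) * sin u - sin (x + e) * sin (u - 2 * e) = sin (2 * e) * sin (x + e - u) := by
  simp only [sin_add, sin_sub, cos_add, sin_two_mul, cos_two_mul]
  linear_combination (-2 * sin x * cos e * sin u) * sin_sq_add_cos_sq e

section Refinement

variable {a b x e u σ : ℝ}

theorem refinement_denominator_eq (ha : a ≠ 0) (hx : sin (x + e) ≠ 0)
    (hσ : σ = b * sin (x - e) / (a * sin (x + e))) :
    σ * a * sin u - b * sin (u - 2 * e) = b * sin (2 * e) * sin (x + e - u) / sin (x + e) := by
  rw [hσ, mul_assoc b, ← sin_sub_mul_sin_sub_sin_add_mul_sin_sub_two_mul]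
  field_simp

theorem refinement_ratio_eq (ha : a ≠ 0) (hb : b ≠ 0) (hx : sin (x + e) ≠ 0)
    (he : sin (2 * e) ≠ 0) (hσ : σ = b * sin (x - e) / (a * sin (x + e))) (c : ℝ) :
    σ * sin (2 * e) * c / (σ * a * sin u - b * sin (u - 2 * e))
      = sin (x - e) * c / (a * sin (x + e - u)) := by
  rw [refinement_denominator_eq ha hx hσ, hσ]
  by_cases hxu : sin (x + e - u) = 0
  · simp [hxu]
  · field_simp
    rw [mul_right_comm, mul_div_cancel_right₀ _ (by rwa [mul_comm e])]

end Refinement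

theorem stmt5_general (η lam μ ξ : ℝ) (h1 : 0 < η) (h2 : η < lam)
    (h4 : η - lam < μ) (h5 : μ < lam - η)
    (hξ : ξ ∈ Set.Ioo 0 (Real.pi - lam - η))
    (σ : ℝ) (hσ : σ = Real.sin (lam + η) * Real.sin (ξ + lam - η)
        / (Real.sin (lam - η) * Real.sin (ξ + lam + η))) :
    (σ * Real.sin (lam - η) * Real.sin ((lam - η - μ)/2)
        - Real.sin (lam + η) * Real.sin ((lam - 5*η - μ)/2)) ≠ 0 ∧
    σ * Real.sin (2*η) * Real.sin ((lam + 3*η + μ)/2)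
      / (σ * Real.sin (lam - η) * Real.sin ((lam - η - μ)/2)
        - Real.sin (lam + η) * Real.sin ((lam - 5*η - μ)/2))
      = Real.sin (ξ + lam - η) * Real.sin ((lam + 3*η + μ)/2)
        / (Real.sin (lam - η) * Real.sin (ξ + (lam + 3*η + μ)/2)) := by
  obtain ⟨hξ0, hξ1⟩ := hξ
  have ha := sin_pos_of_pos_of_lt_pi (x := lam - η) (by linarith) (by linarith)
  have hb := sin_pos_of_pos_of_lt_pi (x := lam + η) (by linarith) (by linarith)
  have hx := sin_pos_of_pos_of_lt_pi (x := ξ + lam + η) (by linarith) (by linarith)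
  have he := sin_pos_of_pos_of_lt_pi (x := 2 * η) (by linarith) (by linarith)
  have hxu := sin_pos_of_pos_of_lt_pi (x := ξ + (lam + 3 * η + μ) / 2) (by linarith) (by linarith)
  rw [show (lam - 5 * η - μ) / 2 = (lam - η - μ) / 2 - 2 * η by ring,
    show ξ + (lam + 3 * η + μ) / 2 = ξ + lam + η - (lam - η - μ) / 2 by ring] at *
  refine ⟨?_, refinement_ratio_eq ha.ne' hb.ne' hx.ne' he.ne' hσ _⟩
  rw [refinement_denominator_eq ha.ne' hx.ne' hσ]
  positivity

/-- Parametric form of g(σ(ξ)) for the 20V model. -/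
theorem stmt5 (η lam μ ξ : ℝ) (h1 : 0 < η) (h2 : η < lam) (h3 : lam < Real.pi - η)
    (h4 : η - lam < μ) (h5 : μ < lam - η)
    (hξ : ξ ∈ Set.Ioo 0 (Real.pi - lam - η))
    (σ : ℝ) (hσ : σ = Real.sin (lam + η) * Real.sin (ξ + lam - η)
        / (Real.sin (lam - η) * Real.sin (ξ + lam + η))) :
    (σ * Real.sin (lam - η) * Real.sin ((lam - η - μ)/2)
        - Real.sin (lam + η) * Real.sin ((lam - 5*η - μ)/2)) ≠ 0 ∧
    σ * Real.sin (2*η) * Real.sin ((lam + 3*η + μ)/2)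
      / (σ * Real.sin (lam - η) * Real.sin ((lam - η - μ)/2)
        - Real.sin (lam + η) * Real.sin ((lam - 5*η - μ)/2))
      = Real.sin (ξ + lam - η) * Real.sin ((lam + 3*η + μ)/2)
        / (Real.sin (lam - η) * Real.sin (ξ + (lam + 3*η + μ)/2)) :=
  stmt5_general η lam μ ξ h1 h2 h4 h5 hξ σ hσ
end

section
/- Let η, λ, μ be real numbers in the admissible range 0 < η < λ < π − η, η − λ < μ < λ − η, and set α = π/(π − 2η). Define, for ξ in the open interval (0, π − λ − η), the real functions f(ξ) = log( sin(α(λ−η))·sin(ξ+λ−η)·sin(αξ) / (α·sin(λ−η)·sin(α(ξ+λ−η))·sin(ξ)) ) and τ(ξ) = sin(λ+η)·sin((λ+3η+μ)/2)·sin(ξ+λ−η)·sin(ξ+(λ−η+μ)/2) / (sin(λ−η)·sin((λ−η+μ)/2)·sin(ξ+λ+η)·sin(ξ+(λ+3η+μ)/2)). Then for every ξ ∈ (0, π − λ − η), (deriv f ξ)·τ(ξ) = R(ξ)·(deriv τ ξ), where R(ξ) = (cot(ξ+λ−η) − cot(ξ) + α·cot(αξ) − α·cot(α(ξ+λ−η)))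 · sin(ξ+λ+η)·sin(ξ+λ−η)·sin(ξ+(λ−η+μ)/2)·sin(ξ+(λ+3η+μ)/2) / ( sin(2η)·( sin(ξ+λ+η)·sin(ξ+λ−η) + sin(ξ+(λ−η+μ)/2)·sin(ξ+(λ+3η+μ)/2) ) ). -/
set_option maxHeartbeats 2000000

private lemma aux1 (k m al s2 c2 sA cA sB cB s0 c0 : ℝ)
    (hk : k ≠ 0) (hm : m ≠ 0) (h2 : s2 ≠ 0) (hA : sA ≠ 0) (hB : sB ≠ 0) (h0 : s0 ≠ 0) :
    ((k * c2 * sA + k * s2 * (al * cA)) * (m * sB * s0)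
        - k * s2 * sA * (m * (al * cB) * s0 + m * sB * c0)) / (m * sB * s0)^2
      / (k * s2 * sA / (m * sB * s0))
      = c2/s2 - c0/s0 + al * (cA/sA) - al * (cB/sB) := by
  field_simp
  ring

private lemma aux2 (K L s1 c1 s2 c2 s3 c3 s4 c4 : ℝ)
    (hK : K ≠ 0) (hL : L ≠ 0) (h1 : s1 ≠ 0) (h2 : s2 ≠ 0) (h3 : s3 ≠ 0) (h4 : s4 ≠ 0) :
    ((K * c2 * s3 + K * s2 * c3) * (L * s1 * s4)
        - K * s2 * s3 * (L * c1 * s4 + L * s1 * c4)) / (L * s1 * s4)^2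
      = (K * s2 * s3 / (L * s1 * s4)) * (c2/s2 + c3/s3 - c1/s1 - c4/s4) := by
  field_simp
  ring

private lemma aux3 (E s1 c1 s2 c2 s3 c3 s4 c4 : ℝ)
    (h1 : s1 ≠ 0) (h2 : s2 ≠ 0) (h3 : s3 ≠ 0) (h4 : s4 ≠ 0)
    (hE1 : E = s1 * c2 - c1 * s2) (hE2 : E = s4 * c3 - c4 * s3) :
    (c2/s2 + c3/s3 - c1/s1 - c4/s4) * (s1 * s2 * s3 * s4)
      = E * (s1 * s2 + s3 * s4) := by
  have t1 : c1/s1 * (s1 * s2 * s3 * s4) = c1 * s2 * s3 * s4 := by field_simp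
  have t2 : c2/s2 * (s1 * s2 * s3 * s4) = c2 * s1 * s3 * s4 := by field_simp
  have t3 : c3/s3 * (s1 * s2 * s3 * s4) = c3 * s1 * s2 * s4 := by field_simp
  have t4 : c4/s4 * (s1 * s2 * s3 * s4) = c4 * s1 * s2 * s3 := by field_simp
  calc (c2/s2 + c3/s3 - c1/s1 - c4/s4) * (s1 * s2 * s3 * s4)
      = c2/s2 * (s1 * s2 * s3 * s4) + c3/s3 * (s1 * s2 * s3 * s4)
        - c1/s1 * (s1 * s2 * s3 * s4) - c4/s4 * (s1 * s2 * s3 * s4) := by ring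
    _ = c2 * s1 * s3 * s4 + c3 * s1 * s2 * s4 - c1 * s2 * s3 * s4 - c4 * s1 * s2 * s3 := by
        rw [t1, t2, t3, t4]
    _ = E * (s1 * s2 + s3 * s4) := by
        linear_combination (-(s3 * s4)) * hE1 + (-(s1 * s2)) * hE2


/-- The function r(τ(ξ)) = (τ(ξ)/τ'(ξ))·f'(ξ) has the explicit closed form R(ξ). -/
theorem stmt6 (η lam μ : ℝ) (h1 : 0 < η) (h2 : η < lam) (h3 : lam < Real.pi - η)
    (h4 : η - lam < μ) (h5 : μ < lam - η)
    (α : ℝ) (hα : α = Real.pi / (Real.pi - 2*η))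
    (f τ : ℝ → ℝ)
    (hf : f = fun ξ => Real.log (Real.sin (α*(lam - η)) * Real.sin (ξ + lam - η) * Real.sin (α*ξ)
        / (α * Real.sin (lam - η) * Real.sin (α*(ξ + lam - η)) * Real.sin ξ)))
    (hτ : τ = fun ξ => Real.sin (lam + η) * Real.sin ((lam + 3*η + μ)/2) * Real.sin (ξ + lam - η)
        * Real.sin (ξ + (lam - η + μ)/2)
        / (Real.sin (lam - η) * Real.sin ((lam - η + μ)/2) * Real.sin (ξ + lam + η)
        * Real.sin (ξ + (lam + 3*η + μ)/2))) :
    ∀ ξ ∈ Set.Ioo 0 (Real.pi - lam - η),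
      deriv f ξ * τ ξ =
        ((Real.cot (ξ + lam - η) - Real.cot ξ + α * Real.cot (α*ξ)
            - α * Real.cot (α*(ξ + lam - η)))
          * (Real.sin (ξ + lam + η) * Real.sin (ξ + lam - η) * Real.sin (ξ + (lam - η + μ)/2)
            * Real.sin (ξ + (lam + 3*η + μ)/2))
          / (Real.sin (2*η) * (Real.sin (ξ + lam + η) * Real.sin (ξ + lam - η)
            + Real.sin (ξ + (lam - η + μ)/2) * Real.sin (ξ + (lam + 3*η + μ)/2))))
        * deriv τ ξ := by
  subst hf hτ
  intro ξ hξ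
  obtain ⟨hξ0, hξπ⟩ := hξ
  have hπ := Real.pi_pos
  have hden : 0 < Real.pi - 2*η := by linarith
  have hαpos : 0 < α := by rw [hα]; positivity
  have hαmul : α * (Real.pi - 2*η) = Real.pi := by rw [hα]; field_simp
  -- positivity of all sines
  have hs0 : 0 < Real.sin ξ := Real.sin_pos_of_pos_of_lt_pi hξ0 (by linarith)
  have hs1 : 0 < Real.sin (ξ + lam + η) :=
    Real.sin_pos_of_pos_of_lt_pi (by linarith) (by linarith)
  have hs2 : 0 < Real.sin (ξ + lam - η) :=
    Real.sin_pos_of_pos_of_lt_pi (by linarith) (by linarith)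
  have hs3 : 0 < Real.sin (ξ + (lam - η + μ)/2) :=
    Real.sin_pos_of_pos_of_lt_pi (by linarith) (by linarith)
  have hs4 : 0 < Real.sin (ξ + (lam + 3*η + μ)/2) :=
    Real.sin_pos_of_pos_of_lt_pi (by linarith) (by linarith)
  have hsA : 0 < Real.sin (α*ξ) := by
    refine Real.sin_pos_of_pos_of_lt_pi (by positivity) ?_
    have h := mul_lt_mul_of_pos_left (show ξ < Real.pi - 2*η by linarith) hαpos
    linarith
  have hsB : 0 < Real.sin (α*(ξ + lam - η)) := by
    refine Real.sin_pos_of_pos_of_lt_pi (mul_pos hαpos (by linarith)) ?_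
    have h := mul_lt_mul_of_pos_left (show ξ + lam - η < Real.pi - 2*η by linarith) hαpos
    linarith
  have hsk : 0 < Real.sin (α*(lam - η)) := by
    refine Real.sin_pos_of_pos_of_lt_pi (mul_pos hαpos (by linarith)) ?_
    have h := mul_lt_mul_of_pos_left (show lam - η < Real.pi - 2*η by linarith) hαpos
    linarith
  have hslm : 0 < Real.sin (lam - η) :=
    Real.sin_pos_of_pos_of_lt_pi (by linarith) (by linarith)
  have hslp : 0 < Real.sin (lam + η) :=
    Real.sin_pos_of_pos_of_lt_pi (by linarith) (by linarith)
  have hsa : 0 < Real.sin ((lam - η + μ)/2) :=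
    Real.sin_pos_of_pos_of_lt_pi (by linarith) (by linarith)
  have hsb : 0 < Real.sin ((lam + 3*η + μ)/2) :=
    Real.sin_pos_of_pos_of_lt_pi (by linarith) (by linarith)
  have hs2η : 0 < Real.sin (2*η) :=
    Real.sin_pos_of_pos_of_lt_pi (by linarith) (by linarith)
  -- basic derivatives
  have hd0 : HasDerivAt (fun x : ℝ => Real.sin x) (Real.cos ξ) ξ := Real.hasDerivAt_sin ξ
  have hd1 : HasDerivAt (fun x : ℝ => Real.sin (x + lam + η)) (Real.cos (ξ + lam + η)) ξ := by
    simpa using (((hasDerivAt_id ξ).add_const lam).add_const η).sin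
  have hd2 : HasDerivAt (fun x : ℝ => Real.sin (x + lam - η)) (Real.cos (ξ + lam - η)) ξ := by
    simpa using (((hasDerivAt_id ξ).add_const lam).sub_const η).sin
  have hd3 : HasDerivAt (fun x : ℝ => Real.sin (x + (lam - η + μ)/2))
      (Real.cos (ξ + (lam - η + μ)/2)) ξ := by
    simpa using ((hasDerivAt_id ξ).add_const ((lam - η + μ)/2)).sin
  have hd4 : HasDerivAt (fun x : ℝ => Real.sin (x + (lam + 3*η + μ)/2))
      (Real.cos (ξ + (lam + 3*η + μ)/2)) ξ := by
    simpa using ((hasDerivAt_id ξ).add_const ((lam + 3*η + μ)/2)).sin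
  have hdA : HasDerivAt (fun x : ℝ => Real.sin (α*x)) (α * Real.cos (α*ξ)) ξ := by
    simpa [mul_comm] using ((hasDerivAt_id ξ).const_mul α).sin
  have hdB : HasDerivAt (fun x : ℝ => Real.sin (α*(x + lam - η)))
      (α * Real.cos (α*(ξ + lam - η))) ξ := by
    have h : HasDerivAt (fun x : ℝ => α*(x + lam - η)) (α * 1) ξ :=
      (((hasDerivAt_id ξ).add_const lam).sub_const η).const_mul α
    simpa [mul_comm] using h.sin
  -- derivative of f
  have hN : HasDerivAt
      (fun x : ℝ => Real.sin (α*(lam - η)) * Real.sin (x + lam - η) * Real.sin (α*x))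
      (Real.sin (α*(lam - η)) * Real.cos (ξ + lam - η) * Real.sin (α*ξ)
        + Real.sin (α*(lam - η)) * Real.sin (ξ + lam - η) * (α * Real.cos (α*ξ))) ξ :=
    (hd2.const_mul _).mul hdA
  have hD : HasDerivAt
      (fun x : ℝ => α * Real.sin (lam - η) * Real.sin (α*(x + lam - η)) * Real.sin x)
      (α * Real.sin (lam - η) * (α * Real.cos (α*(ξ + lam - η))) * Real.sin ξ
        + α * Real.sin (lam - η) * Real.sin (α*(ξ + lam - η)) * Real.cos ξ) ξ :=
    (hdB.const_mul _).mul hd0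
  have hDpos : 0 < α * Real.sin (lam - η) * Real.sin (α*(ξ + lam - η)) * Real.sin ξ :=
    mul_pos (mul_pos (mul_pos hαpos hslm) hsB) hs0
  have hNpos : 0 < Real.sin (α*(lam - η)) * Real.sin (ξ + lam - η) * Real.sin (α*ξ) :=
    mul_pos (mul_pos hsk hs2) hsA
  have hgne : Real.sin (α*(lam - η)) * Real.sin (ξ + lam - η) * Real.sin (α*ξ)
      / (α * Real.sin (lam - η) * Real.sin (α*(ξ + lam - η)) * Real.sin ξ) ≠ 0 :=
    (div_pos hNpos hDpos).ne'
  have hfd : HasDerivAt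
      (fun x : ℝ => Real.log (Real.sin (α*(lam - η)) * Real.sin (x + lam - η) * Real.sin (α*x)
        / (α * Real.sin (lam - η) * Real.sin (α*(x + lam - η)) * Real.sin x)))
      (((Real.sin (α*(lam - η)) * Real.cos (ξ + lam - η) * Real.sin (α*ξ)
          + Real.sin (α*(lam - η)) * Real.sin (ξ + lam - η) * (α * Real.cos (α*ξ)))
          * (α * Real.sin (lam - η) * Real.sin (α*(ξ + lam - η)) * Real.sin ξ)
        - Real.sin (α*(lam - η)) * Real.sin (ξ + lam - η) * Real.sin (α*ξ)
          * (α * Real.sin (lam - η) * (α * Real.cos (α*(ξ + lam - η))) * Real.sin ξ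
            + α * Real.sin (lam - η) * Real.sin (α*(ξ + lam - η)) * Real.cos ξ))
        / (α * Real.sin (lam - η) * Real.sin (α*(ξ + lam - η)) * Real.sin ξ)^2
        / (Real.sin (α*(lam - η)) * Real.sin (ξ + lam - η) * Real.sin (α*ξ)
          / (α * Real.sin (lam - η) * Real.sin (α*(ξ + lam - η)) * Real.sin ξ))) ξ :=
    (hN.div hD hDpos.ne').log hgne
  have derivf : deriv
      (fun x : ℝ => Real.log (Real.sin (α*(lam - η)) * Real.sin (x + lam - η) * Real.sin (α*x)
        / (α * Real.sin (lam - η) * Real.sin (α*(x + lam - η)) * Real.sin x))) ξ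
      = Real.cos (ξ + lam - η) / Real.sin (ξ + lam - η) - Real.cos ξ / Real.sin ξ
        + α * (Real.cos (α*ξ) / Real.sin (α*ξ))
        - α * (Real.cos (α*(ξ + lam - η)) / Real.sin (α*(ξ + lam - η))) := by
    rw [hfd.deriv]
    exact aux1 _ _ _ _ _ _ _ _ _ _ _ hsk.ne' (mul_pos hαpos hslm).ne'
      hs2.ne' hsA.ne' hsB.ne' hs0.ne'
  -- derivative of τ
  have hP : HasDerivAt
      (fun x : ℝ => Real.sin (lam + η) * Real.sin ((lam + 3*η + μ)/2) * Real.sin (x + lam - η)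
        * Real.sin (x + (lam - η + μ)/2))
      (Real.sin (lam + η) * Real.sin ((lam + 3*η + μ)/2) * Real.cos (ξ + lam - η)
          * Real.sin (ξ + (lam - η + μ)/2)
        + Real.sin (lam + η) * Real.sin ((lam + 3*η + μ)/2) * Real.sin (ξ + lam - η)
          * Real.cos (ξ + (lam - η + μ)/2)) ξ :=
    (hd2.const_mul _).mul hd3
  have hQ : HasDerivAt
      (fun x : ℝ => Real.sin (lam - η) * Real.sin ((lam - η + μ)/2) * Real.sin (x + lam + η)
        * Real.sin (x + (lam + 3*η + μ)/2))
      (Real.sin (lam - η) * Real.sin ((lam - η + μ)/2) * Real.cos (ξ + lam + η)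
          * Real.sin (ξ + (lam + 3*η + μ)/2)
        + Real.sin (lam - η) * Real.sin ((lam - η + μ)/2) * Real.sin (ξ + lam + η)
          * Real.cos (ξ + (lam + 3*η + μ)/2)) ξ :=
    (hd1.const_mul _).mul hd4
  have hQpos : 0 < Real.sin (lam - η) * Real.sin ((lam - η + μ)/2) * Real.sin (ξ + lam + η)
      * Real.sin (ξ + (lam + 3*η + μ)/2) :=
    mul_pos (mul_pos (mul_pos hslm hsa) hs1) hs4
  have hτd : HasDerivAt
      (fun x : ℝ => Real.sin (lam + η) * Real.sin ((lam + 3*η + μ)/2) * Real.sin (x + lam - η)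
        * Real.sin (x + (lam - η + μ)/2)
        / (Real.sin (lam - η) * Real.sin ((lam - η + μ)/2) * Real.sin (x + lam + η)
        * Real.sin (x + (lam + 3*η + μ)/2)))
      (((Real.sin (lam + η) * Real.sin ((lam + 3*η + μ)/2) * Real.cos (ξ + lam - η)
          * Real.sin (ξ + (lam - η + μ)/2)
        + Real.sin (lam + η) * Real.sin ((lam + 3*η + μ)/2) * Real.sin (ξ + lam - η)
          * Real.cos (ξ + (lam - η + μ)/2))
        * (Real.sin (lam - η) * Real.sin ((lam - η + μ)/2) * Real.sin (ξ + lam + η)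
          * Real.sin (ξ + (lam + 3*η + μ)/2))
        - Real.sin (lam + η) * Real.sin ((lam + 3*η + μ)/2) * Real.sin (ξ + lam - η)
          * Real.sin (ξ + (lam - η + μ)/2)
          * (Real.sin (lam - η) * Real.sin ((lam - η + μ)/2) * Real.cos (ξ + lam + η)
              * Real.sin (ξ + (lam + 3*η + μ)/2)
            + Real.sin (lam - η) * Real.sin ((lam - η + μ)/2) * Real.sin (ξ + lam + η)
              * Real.cos (ξ + (lam + 3*η + μ)/2)))
        / (Real.sin (lam - η) * Real.sin ((lam - η + μ)/2) * Real.sin (ξ + lam + η)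
          * Real.sin (ξ + (lam + 3*η + μ)/2))^2) ξ :=
    hP.div hQ hQpos.ne'
  have derivτ : deriv
      (fun x : ℝ => Real.sin (lam + η) * Real.sin ((lam + 3*η + μ)/2) * Real.sin (x + lam - η)
        * Real.sin (x + (lam - η + μ)/2)
        / (Real.sin (lam - η) * Real.sin ((lam - η + μ)/2) * Real.sin (x + lam + η)
        * Real.sin (x + (lam + 3*η + μ)/2))) ξ
      = (Real.sin (lam + η) * Real.sin ((lam + 3*η + μ)/2) * Real.sin (ξ + lam - η)
          * Real.sin (ξ + (lam - η + μ)/2)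
          / (Real.sin (lam - η) * Real.sin ((lam - η + μ)/2) * Real.sin (ξ + lam + η)
          * Real.sin (ξ + (lam + 3*η + μ)/2)))
        * (Real.cos (ξ + lam - η) / Real.sin (ξ + lam - η)
          + Real.cos (ξ + (lam - η + μ)/2) / Real.sin (ξ + (lam - η + μ)/2)
          - Real.cos (ξ + lam + η) / Real.sin (ξ + lam + η)
          - Real.cos (ξ + (lam + 3*η + μ)/2) / Real.sin (ξ + (lam + 3*η + μ)/2)) := by
    rw [hτd.deriv]
    exact aux2 _ _ _ _ _ _ _ _ _ _ (mul_pos hslp hsb).ne' (mul_pos hslm hsa).ne'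
      hs1.ne' hs2.ne' hs3.ne' hs4.ne'
  -- the key trigonometric identity
  have hE1 : Real.sin (2*η) = Real.sin (ξ + lam + η) * Real.cos (ξ + lam - η)
      - Real.cos (ξ + lam + η) * Real.sin (ξ + lam - η) := by
    have h := Real.sin_sub (ξ + lam + η) (ξ + lam - η)
    rw [show ξ + lam + η - (ξ + lam - η) = 2*η by ring] at h
    linarith
  have hE2 : Real.sin (2*η) = Real.sin (ξ + (lam + 3*η + μ)/2) * Real.cos (ξ + (lam - η + μ)/2)
      - Real.cos (ξ + (lam + 3*η + μ)/2) * Real.sin (ξ + (lam - η + μ)/2) := by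
    have h := Real.sin_sub (ξ + (lam + 3*η + μ)/2) (ξ + (lam - η + μ)/2)
    rw [show ξ + (lam + 3*η + μ)/2 - (ξ + (lam - η + μ)/2) = 2*η by ring] at h
    linarith
  have hkeyT : (Real.cos (ξ + lam - η) / Real.sin (ξ + lam - η)
      + Real.cos (ξ + (lam - η + μ)/2) / Real.sin (ξ + (lam - η + μ)/2)
      - Real.cos (ξ + lam + η) / Real.sin (ξ + lam + η)
      - Real.cos (ξ + (lam + 3*η + μ)/2) / Real.sin (ξ + (lam + 3*η + μ)/2))
      * (Real.sin (ξ + lam + η) * Real.sin (ξ + lam - η) * Real.sin (ξ + (lam - η + μ)/2)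
        * Real.sin (ξ + (lam + 3*η + μ)/2))
      = Real.sin (2*η) * (Real.sin (ξ + lam + η) * Real.sin (ξ + lam - η)
        + Real.sin (ξ + (lam - η + μ)/2) * Real.sin (ξ + (lam + 3*η + μ)/2)) :=
    aux3 _ _ _ _ _ _ _ _ _ hs1.ne' hs2.ne' hs3.ne' hs4.ne' hE1 hE2
  have hDnne : Real.sin (2*η) * (Real.sin (ξ + lam + η) * Real.sin (ξ + lam - η)
      + Real.sin (ξ + (lam - η + μ)/2) * Real.sin (ξ + (lam + 3*η + μ)/2)) ≠ 0 := by
    have : 0 < Real.sin (ξ + lam + η) * Real.sin (ξ + lam - η)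
        + Real.sin (ξ + (lam - η + μ)/2) * Real.sin (ξ + (lam + 3*η + μ)/2) := by
      have := mul_pos hs1 hs2
      have := mul_pos hs3 hs4
      linarith
    exact (mul_pos hs2η this).ne'
  -- put it together
  simp only [Real.cot_eq_cos_div_sin]
  rw [derivf, derivτ]
  rw [div_mul_eq_mul_div, eq_div_iff hDnne]
  rw [← hkeyT]
  ring
end

section
/- Let ϖ, ℓ, m, p, τ be real numbers with ℓ ≠ p, satisfying ϖ·(ℓ − p)·(m − p) = p·(ℓ + m − p) and ℓ + m − p = τ·(ℓ − p). Then ℓ·(τ − 1)·(τ + ϖ) = m·τ·(1 + ϖ). -/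
/-- Tangent-method extremization: slope parameter ℓ/m = τ(1+ϖ)/((τ−1)(τ+ϖ)) in polynomial form. -/
theorem stmt7 (ϖ ℓ m p τ : ℝ) (h : ℓ ≠ p)
    (h1 : ϖ * (ℓ - p) * (m - p) = p * (ℓ + m - p))
    (h2 : ℓ + m - p = τ * (ℓ - p)) :
    ℓ * (τ - 1) * (τ + ϖ) = m * τ * (1 + ϖ) := by
  have hd : ℓ - p ≠ 0 := sub_ne_zero.mpr h
  have h3 : ϖ * (m - p) * (ℓ - p) = p * τ * (ℓ - p) := by
    linear_combination h1 + p * h2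
  have h4 : ϖ * (m - p) = p * τ := mul_right_cancel₀ hd h3
  linear_combination (-(τ + ϖ)) * h2 - (τ - 1) * h4
end

section
/- Let η be a real number with 0 < η < π/6 and let ξ ∈ (0, π − 6η). Set ϖ0 = 1 + 2cos(4η) and τ = sin(6η)·sin(ξ+2η) / (sin(2η)·sin(ξ+6η)). Then τ ≠ 1, τ + ϖ0 ≠ 0, and τ·(1 + ϖ0) / ((τ − 1)·(τ + ϖ0)) = sin(ξ+6η)·sin(ξ+2η) / (sin(ξ)·sin(ξ+4η)). -/
/-!
Write `D = sin 2η · sin (ξ + 6η)`. The Ptolemy-type identity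
`sin (u + v) sin w - sin u sin (w + v) = sin v sin (w - u)` gives `τ - 1 = sin 4η sin ξ / D`, and
`sin 6η = ϖ sin 2η` together with sum-to-product gives `τ + ϖ = 2 sin 6η sin (ξ + 4η) cos 2η / D`.
For `ξ ∈ (0, π - 6η)` every sine and cosine here is positive, so both factors are nonzero, and
with `1 + ϖ = 4 cos² 2η` and `sin 4η = 2 sin 2η cos 2η` the quotient collapses to the claimed one.
-/

open Real

namespace Real

theorem sin_add_mul_sin_sub_sin_mul_sin_add (u v w : ℝ) :
    sin (u + v) * sin w - sin u * sin (w + v) = sin v * sin (w - u) := by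
  simp only [sin_add, sin_sub]
  ring

theorem sin_three_mul_eq_sin_mul (x : ℝ) : sin (3 * x) = sin x * (1 + 2 * cos (2 * x)) := by
  rw [sin_three_mul, cos_two_mul, cos_sq']
  ring

end Real

section

variable {η ξ : ℝ}

theorem sin_mul_sin_div_sub_one (hD : sin (2 * η) * sin (ξ + 6 * η) ≠ 0) :
    sin (6 * η) * sin (ξ + 2 * η) / (sin (2 * η) * sin (ξ + 6 * η)) - 1
      = sin (4 * η) * sin ξ / (sin (2 * η) * sin (ξ + 6 * η)) := by
  rw [div_sub_one hD]
  congr 1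
  convert sin_add_mul_sin_sub_sin_mul_sin_add (2 * η) (4 * η) (ξ + 2 * η) using 3 <;> ring_nf

theorem sin_mul_sin_div_add_one_add_two_mul_cos (hD : sin (2 * η) * sin (ξ + 6 * η) ≠ 0) :
    sin (6 * η) * sin (ξ + 2 * η) / (sin (2 * η) * sin (ξ + 6 * η)) + (1 + 2 * cos (4 * η))
      = 2 * sin (6 * η) * sin (ξ + 4 * η) * cos (2 * η)
          / (sin (2 * η) * sin (ξ + 6 * η)) := by
  have h6 : sin (6 * η) = sin (2 * η) * (1 + 2 * cos (4 * η)) := by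
    rw [show 6 * η = 3 * (2 * η) by ring, show 4 * η = 2 * (2 * η) by ring]
    exact sin_three_mul_eq_sin_mul _
  have hsum : sin (ξ + 2 * η) + sin (ξ + 6 * η) = 2 * sin (ξ + 4 * η) * cos (2 * η) := by
    rw [show ξ + 2 * η = ξ + 4 * η - 2 * η by ring, show ξ + 6 * η = ξ + 4 * η + 2 * η by ring,
      sin_sub (ξ + 4 * η), sin_add (ξ + 4 * η)]
    ring
  rw [div_add' _ _ _ hD]
  congr 1
  linear_combination sin (6 * η) * hsum - sin (ξ + 6 * η) * h6

end

theorem stmt8_general (η ξ : ℝ) (h1 : 0 < η)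
    (hξ : ξ ∈ Set.Ioo 0 (Real.pi - 6*η))
    (ϖ τ : ℝ) (hϖ : ϖ = 1 + 2*Real.cos (4*η))
    (hτ : τ = Real.sin (6*η) * Real.sin (ξ + 2*η) / (Real.sin (2*η) * Real.sin (ξ + 6*η))) :
    τ ≠ 1 ∧ τ + ϖ ≠ 0 ∧
    τ * (1 + ϖ) / ((τ - 1) * (τ + ϖ))
      = Real.sin (ξ + 6*η) * Real.sin (ξ + 2*η) / (Real.sin ξ * Real.sin (ξ + 4*η)) := by
  obtain ⟨hξ0, hξπ⟩ := hξ
  have hs2 : 0 < sin (2 * η) := sin_pos_of_pos_of_lt_pi (by linarith) (by linarith)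
  have hs4 : 0 < sin (4 * η) := sin_pos_of_pos_of_lt_pi (by linarith) (by linarith)
  have hs6 : 0 < sin (6 * η) := sin_pos_of_pos_of_lt_pi (by linarith) (by linarith)
  have hc2 : 0 < cos (2 * η) := cos_pos_of_mem_Ioo ⟨by linarith, by linarith⟩
  have hsξ : 0 < sin ξ := sin_pos_of_pos_of_lt_pi hξ0 (by linarith)
  have hsξ4 : 0 < sin (ξ + 4 * η) := sin_pos_of_pos_of_lt_pi (by linarith) (by linarith)
  have hsξ6 : 0 < sin (ξ + 6 * η) := sin_pos_of_pos_of_lt_pi (by linarith) (by linarith)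
  have hD : sin (2 * η) * sin (ξ + 6 * η) ≠ 0 := by positivity
  have hτ1 := sin_mul_sin_div_sub_one hD
  have hτϖ := sin_mul_sin_div_add_one_add_two_mul_cos hD
  rw [← hτ, ← hϖ] at hτϖ
  rw [← hτ] at hτ1
  have hτ1_pos : 0 < τ - 1 := by rw [hτ1]; positivity
  have hτϖ_pos : 0 < τ + ϖ := by rw [hτϖ]; positivity
  refine ⟨by linarith, hτϖ_pos.ne', ?_⟩
  have h1ϖ : 1 + ϖ = 4 * cos (2 * η) ^ 2 := by
    rw [hϖ, show 4 * η = 2 * (2 * η) by ring, cos_two_mul]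
    ring
  have hs4_eq : sin (4 * η) = 2 * sin (2 * η) * cos (2 * η) := by
    rw [show 4 * η = 2 * (2 * η) by ring, sin_two_mul]
  rw [hτ1, hτϖ, h1ϖ, hτ, hs4_eq, div_eq_div_iff (by positivity) (by positivity)]
  field_simp
  ring

/-- Closed parametric form of the slope function s(τ) for the 'normal' portion at μ=0, λ=5η. -/
theorem stmt8 (η ξ : ℝ) (h1 : 0 < η) (h2 : η < Real.pi/6)
    (hξ : ξ ∈ Set.Ioo 0 (Real.pi - 6*η))
    (ϖ τ : ℝ) (hϖ : ϖ = 1 + 2*Real.cos (4*η))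
    (hτ : τ = Real.sin (6*η) * Real.sin (ξ + 2*η) / (Real.sin (2*η) * Real.sin (ξ + 6*η))) :
    τ ≠ 1 ∧ τ + ϖ ≠ 0 ∧
    τ * (1 + ϖ) / ((τ - 1) * (τ + ϖ))
      = Real.sin (ξ + 6*η) * Real.sin (ξ + 2*η) / (Real.sin ξ * Real.sin (ξ + 4*η)) :=
  stmt8_general η ξ h1 hξ ϖ τ hϖ hτ
end

section
/- Let η be a real number with 0 < η < π/6 and let ξ ∈ (−2η, 0). Set ϖ0 = 1 + 2cos(4η) and τ = sin(6η)·sin(ξ+2η) / (sin(2η)·sin(ξ+6η)), and assume τ·(1 − ϖ0) + ϖ0 ≠ 0. Then τ ≠ 1, τ + ϖ0 ≠ 0, and τ·(1 + ϖ0)/((τ − 1)·(τ + ϖ0)) + ϖ0/(τ·(1 − ϖ0) + ϖ0) = sin(ξ+6η)·sin(ξ+2η)/(sin(ξ)·sin(ξ+4η)) − sin(ξ+6η)/sin(ξ−2η). -/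
/-! With θ = 2η one has ϖ = sin 3θ / sin θ, and the addition formulas turn τ, τ - 1, τ + ϖ and
τ(1 - ϖ) + ϖ into single products of sines divided by sin θ · sin(ξ + 3θ); the slope then
collapses by field arithmetic. None of these sines vanishes, since ξ + θ, ξ + 2θ, ξ + 3θ lie in
(0, π) and ξ, ξ - θ in (-π, 0). -/

open Real

/-- In the application `p, q, r, X, m` are `sin (ξ + θ), sin (ξ + 2θ), sin (ξ + 3θ), sin ξ,
sin (ξ - θ)` and `c = cos θ`. -/
theorem shear_slope_eq_of_relations {τ ϖ c X p q r m : ℝ} (hτ : τ = ϖ * p / r)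
    (hϖ : 1 + ϖ = 4 * c ^ 2) (hX : ϖ * p - r = 2 * c * X) (hq : p + r = 2 * c * q)
    (hm : p - 2 * c * X = -m) (hϖ0 : ϖ ≠ 0) (hc : c ≠ 0) (hX0 : X ≠ 0) (hq0 : q ≠ 0)
    (hr : r ≠ 0) (hm0 : m ≠ 0) :
    τ ≠ 1 ∧ τ + ϖ ≠ 0 ∧
      τ * (1 + ϖ) / ((τ - 1) * (τ + ϖ)) + ϖ / (τ * (1 - ϖ) + ϖ) = r * p / (X * q) - r / m := by
  have hτ1 : τ - 1 = 2 * c * X / r := by rw [hτ, ← hX]; field_simp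
  have hτϖ : τ + ϖ = 2 * ϖ * c * q / r := by
    rw [hτ]; field_simp
    exact hq
  have hden : τ * (1 - ϖ) + ϖ = -(ϖ * m) / r := by
    rw [hτ]; field_simp
    linear_combination hm - hX
  refine ⟨fun h => ?_, ?_, ?_⟩
  · exact sub_ne_zero.mp (hτ1 ▸ by positivity) h
  · rw [hτϖ]; positivity
  · rw [hτ1, hτϖ, hden, hϖ, hτ]
    field_simp
    ring

theorem Real.sin_three_mul_div_sin (θ : ℝ) (h : sin θ ≠ 0) :
    sin (3 * θ) / sin θ = 1 + 2 * cos (2 * θ) := by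
  rw [div_eq_iff h, sin_three_mul, cos_two_mul, cos_sq']; ring

theorem Real.sin_three_mul_mul_sin_add_sub (x θ : ℝ) :
    sin (3 * θ) * sin (x + θ) - sin θ * sin (x + 3 * θ) = sin (2 * θ) * sin x := by
  simp only [sin_add, sin_three_mul, cos_three_mul, sin_two_mul]
  linear_combination -4 * sin θ * sin x * cos θ * sin_sq_add_cos_sq θ

theorem Real.sin_three_mul_div_sin_mul_sin_add_sub (x θ : ℝ) (h : sin θ ≠ 0) :
    sin (3 * θ) / sin θ * sin (x + θ) - sin (x + 3 * θ) = 2 * cos θ * sin x := by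
  rw [div_mul_eq_mul_div, div_sub' h, div_eq_iff h, mul_comm _ (sin θ),
    sin_three_mul_mul_sin_add_sub, sin_two_mul]
  ring

theorem Real.sin_add_add_sin_add_three_mul (x θ : ℝ) :
    sin (x + θ) + sin (x + 3 * θ) = 2 * cos θ * sin (x + 2 * θ) := by
  rw [sin_add_sin, show (x + θ + (x + 3 * θ)) / 2 = x + 2 * θ by ring,
    show (x + θ - (x + 3 * θ)) / 2 = -θ by ring, cos_neg]
  ring

theorem Real.sin_add_sub_two_mul_cos_mul_sin (x θ : ℝ) :
    sin (x + θ) - 2 * cos θ * sin x = -sin (x - θ) := by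
  rw [sin_add, sin_sub]; ring

theorem stmt9_general (η ξ : ℝ) (h1 : 0 < η) (h2 : η < Real.pi/6)
    (hξ : ξ ∈ Set.Ioo (-(2*η)) 0)
    (ϖ τ : ℝ) (hϖ : ϖ = 1 + 2*Real.cos (4*η))
    (hτ : τ = Real.sin (6*η) * Real.sin (ξ + 2*η) / (Real.sin (2*η) * Real.sin (ξ + 6*η))) :
    τ ≠ 1 ∧ τ + ϖ ≠ 0 ∧
    τ * (1 + ϖ) / ((τ - 1) * (τ + ϖ)) + ϖ / (τ * (1 - ϖ) + ϖ)
      = Real.sin (ξ + 6*η) * Real.sin (ξ + 2*η) / (Real.sin ξ * Real.sin (ξ + 4*η))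
        - Real.sin (ξ + 6*η) / Real.sin (ξ - 2*η) := by
  obtain ⟨hξl, hξr⟩ := hξ
  rw [show 6 * η = 3 * (2 * η) by ring, show 4 * η = 2 * (2 * η) by ring] at *
  set θ := 2 * η
  have hθπ : 3 * θ < π := by linarith
  have hsθ : 0 < sin θ := sin_pos_of_pos_of_lt_pi (by linarith) (by linarith)
  have hϖ' : ϖ = sin (3 * θ) / sin θ := by rw [hϖ, sin_three_mul_div_sin θ hsθ.ne']
  have hϖpos : 0 < ϖ := hϖ' ▸ div_pos (sin_pos_of_pos_of_lt_pi (by linarith) hθπ) hsθ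
  have hr : 0 < sin (ξ + 3 * θ) := sin_pos_of_pos_of_lt_pi (by linarith) (by linarith)
  refine shear_slope_eq_of_relations (c := cos θ) ?_ ?_
    (hϖ' ▸ sin_three_mul_div_sin_mul_sin_add_sub ξ θ hsθ.ne')
    (sin_add_add_sin_add_three_mul ξ θ) (sin_add_sub_two_mul_cos_mul_sin ξ θ) hϖpos.ne'
    (cos_pos_of_mem_Ioo ⟨by linarith, by linarith⟩).ne'
    (sin_neg_of_neg_of_neg_pi_lt hξr (by linarith)).ne
    (sin_pos_of_pos_of_lt_pi (by linarith) (by linarith)).ne' hr.ne'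
    (sin_neg_of_neg_of_neg_pi_lt (by linarith) (by linarith)).ne
  · rw [hτ, hϖ']; field_simp
  · rw [hϖ, cos_sq θ]; ring

/-- Closed parametric form of the shear slope function s̄(τ) at μ=0, λ=5η. -/
theorem stmt9 (η ξ : ℝ) (h1 : 0 < η) (h2 : η < Real.pi/6)
    (hξ : ξ ∈ Set.Ioo (-(2*η)) 0)
    (ϖ τ : ℝ) (hϖ : ϖ = 1 + 2*Real.cos (4*η))
    (hτ : τ = Real.sin (6*η) * Real.sin (ξ + 2*η) / (Real.sin (2*η) * Real.sin (ξ + 6*η)))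
    (hden : τ * (1 - ϖ) + ϖ ≠ 0) :
    τ ≠ 1 ∧ τ + ϖ ≠ 0 ∧
    τ * (1 + ϖ) / ((τ - 1) * (τ + ϖ)) + ϖ / (τ * (1 - ϖ) + ϖ)
      = Real.sin (ξ + 6*η) * Real.sin (ξ + 2*η) / (Real.sin ξ * Real.sin (ξ + 4*η))
        - Real.sin (ξ + 6*η) / Real.sin (ξ - 2*η) :=
  stmt9_general η ξ h1 h2 hξ ϖ τ hϖ hτ
end

section
/- Let η be a real number with 0 < η < π/6, set α = π/(π − 2η), and for ζ ∈ (0, π − 6η) define R0(ζ) = (cot(ζ+4η) − cot(ζ) + α·cot(αζ) − α·cot(α(ζ+4η))) · sin(ζ+6η)·sin(ζ+2η)/sin(4η) and S0(ζ) = sin(ζ+6η)·sin(ζ+2η)/(sin(ζ)·sin(ζ+4η)). Then for every ξ ∈ (0, π − 6η) and all real numbers x, y: y + S0(ξ)·(x − 1) − R0(ξ) = S0(ξ)·( x + S0(π − 6η − ξ)·(y − 1) − R0(π − 6η − ξ) ). -/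
/-!
Write `ξ' = π - 6η - ξ`. The four angles `ξ', ξ' + 2η, ξ' + 4η, ξ' + 6η` are the supplements of
`ξ + 6η, ξ + 4η, ξ + 2η, ξ`, so `S0 ξ' = (S0 ξ)⁻¹`, and, because `α (π - 2η) = π`, the two `α`-terms
of `R0 ξ'` are the negatives of those of `R0 ξ` in swapped order. In `R0 ξ - S0 ξ · R0 ξ'` the
`α`-terms therefore cancel, and `cot a - cot b = sin (b - a) / (sin a sin b)` turns the remaining
cotangents into `1 - S0 ξ`.
-/

open Real

namespace Real

theorem cot_pi_sub (x : ℝ) : cot (π - x) = -cot x := by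
  simp only [cot_eq_cos_div_sin, sin_pi_sub, cos_pi_sub, neg_div]

theorem cot_sub_cot {a b : ℝ} (ha : sin a ≠ 0) (hb : sin b ≠ 0) :
    cot a - cot b = sin (b - a) / (sin a * sin b) := by
  rw [cot_eq_cos_div_sin, cot_eq_cos_div_sin, sin_sub]
  field_simp

end Real

/-- Slope `S0` of the tangent lines. -/
noncomputable def tangentSlope (η ζ : ℝ) : ℝ :=
  sin (ζ + 6 * η) * sin (ζ + 2 * η) / (sin ζ * sin (ζ + 4 * η))

/-- Intercept `R0` of the tangent lines. -/
noncomputable def tangentIntercept (η α ζ : ℝ) : ℝ :=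
  (cot (ζ + 4 * η) - cot ζ + α * cot (α * ζ) - α * cot (α * (ζ + 4 * η)))
    * (sin (ζ + 6 * η) * sin (ζ + 2 * η) / sin (4 * η))

section Reflection

variable {η α : ℝ} (ξ : ℝ)

theorem tangentSlope_reflect : tangentSlope η (π - 6 * η - ξ) = (tangentSlope η ξ)⁻¹ := by
  rw [tangentSlope, tangentSlope, inv_div,
    show π - 6 * η - ξ = π - (ξ + 6 * η) by ring, show π - (ξ + 6 * η) + 2 * η = π - (ξ + 4 * η) by ring,
    show π - (ξ + 6 * η) + 4 * η = π - (ξ + 2 * η) by ring, show π - (ξ + 6 * η) + 6 * η = π - ξ by ring]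
  simp only [sin_pi_sub]

theorem tangentIntercept_reflect (hα : α * (π - 2 * η) = π) :
    tangentIntercept η α (π - 6 * η - ξ)
      = (cot (ξ + 6 * η) - cot (ξ + 2 * η) + α * cot (α * ξ) - α * cot (α * (ξ + 4 * η)))
        * (sin ξ * sin (ξ + 4 * η) / sin (4 * η)) := by
  have hα₁ : α * (π - 6 * η - ξ) = π - α * (ξ + 4 * η) := by linear_combination hα
  have hα₂ : α * (π - 6 * η - ξ + 4 * η) = π - α * ξ := by linear_combination hα
  rw [tangentIntercept, hα₁, hα₂,
    show π - 6 * η - ξ = π - (ξ + 6 * η) by ring, show π - (ξ + 6 * η) + 2 * η = π - (ξ + 4 * η) by ring,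
    show π - (ξ + 6 * η) + 4 * η = π - (ξ + 2 * η) by ring, show π - (ξ + 6 * η) + 6 * η = π - ξ by ring]
  simp only [sin_pi_sub, cot_pi_sub]
  ring

theorem tangentIntercept_sub_mul_tangentIntercept_reflect (hα : α * (π - 2 * η) = π)
    (h₀ : sin ξ ≠ 0) (h₂ : sin (ξ + 2 * η) ≠ 0) (h₄ : sin (ξ + 4 * η) ≠ 0)
    (h₆ : sin (ξ + 6 * η) ≠ 0) (hη : sin (4 * η) ≠ 0) :
    tangentIntercept η α ξ - tangentSlope η ξ * tangentIntercept η α (π - 6 * η - ξ)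
      = 1 - tangentSlope η ξ := by
  have hc₀₄ := cot_sub_cot h₄ h₀
  have hc₂₆ := cot_sub_cot h₂ h₆
  rw [show ξ - (ξ + 4 * η) = -(4 * η) by ring, sin_neg] at hc₀₄
  rw [show ξ + 6 * η - (ξ + 2 * η) = 4 * η by ring] at hc₂₆
  rw [tangentIntercept_reflect ξ hα, tangentIntercept, tangentSlope]
  set s₀ := sin ξ
  set s₂ := sin (ξ + 2 * η)
  set s₄ := sin (ξ + 4 * η)
  set s₆ := sin (ξ + 6 * η)
  set s := sin (4 * η)
  calc _ = ((cot (ξ + 4 * η) - cot ξ) + (cot (ξ + 2 * η) - cot (ξ + 6 * η))) * (s₆ * s₂ / s) := by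
        field_simp; ring
    _ = 1 - s₆ * s₂ / (s₀ * s₄) := by
        rw [hc₀₄, hc₂₆]
        field_simp
        ring

end Reflection

theorem line_eq_mul_line_swap {S R S' R' : ℝ} (hS : S * S' = 1) (hR : R - S * R' = 1 - S)
    (x y : ℝ) : y + S * (x - 1) - R = S * (x + S' * (y - 1) - R') := by
  linear_combination (1 - y) * hS - hR

theorem stmt10_general (η : ℝ) (h1 : 0 < η)
    (α : ℝ) (hα : α = Real.pi / (Real.pi - 2*η))
    (R0 S0 : ℝ → ℝ)
    (hR0 : R0 = fun ζ => (Real.cot (ζ + 4*η) - Real.cot ζ + α * Real.cot (α*ζ)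
        - α * Real.cot (α*(ζ + 4*η)))
        * (Real.sin (ζ + 6*η) * Real.sin (ζ + 2*η) / Real.sin (4*η)))
    (hS0 : S0 = fun ζ => Real.sin (ζ + 6*η) * Real.sin (ζ + 2*η)
        / (Real.sin ζ * Real.sin (ζ + 4*η))) :
    ∀ ξ ∈ Set.Ioo 0 (Real.pi - 6*η), ∀ x y : ℝ,
      y + S0 ξ * (x - 1) - R0 ξ
        = S0 ξ * (x + S0 (Real.pi - 6*η - ξ) * (y - 1) - R0 (Real.pi - 6*η - ξ)) := by
  rintro ξ ⟨hξ₀, hξ₁⟩ x y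
  have hS0 : S0 = tangentSlope η := hS0
  have hR0 : R0 = tangentIntercept η α := hR0
  subst hS0 hR0
  have hsin : ∀ t, 0 < t → t < π → sin t ≠ 0 := fun t h₀ h₁ => (sin_pos_of_pos_of_lt_pi h₀ h₁).ne'
  have h₀ := hsin ξ hξ₀ (by linarith)
  have h₂ := hsin (ξ + 2 * η) (by linarith) (by linarith)
  have h₄ := hsin (ξ + 4 * η) (by linarith) (by linarith)
  have h₆ := hsin (ξ + 6 * η) (by linarith) (by linarith)
  have hη := hsin (4 * η) (by linarith) (by linarith)
  have hαπ : α * (π - 2 * η) = π := by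
    rw [hα]; exact div_mul_cancel₀ _ (by linarith)
  refine line_eq_mul_line_swap ?_
    (tangentIntercept_sub_mul_tangentIntercept_reflect ξ hαπ h₀ h₂ h₄ h₆ hη) x y
  rw [tangentSlope_reflect, mul_inv_cancel₀]
  exact div_ne_zero (mul_ne_zero h₆ h₂) (mul_ne_zero h₀ h₄)

/-- x ↔ y symmetry of the family of tangent lines producing the 'normal' portion
at μ=0, λ=5η. -/
theorem stmt10 (η : ℝ) (h1 : 0 < η) (h2 : η < Real.pi/6)
    (α : ℝ) (hα : α = Real.pi / (Real.pi - 2*η))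
    (R0 S0 : ℝ → ℝ)
    (hR0 : R0 = fun ζ => (Real.cot (ζ + 4*η) - Real.cot ζ + α * Real.cot (α*ζ)
        - α * Real.cot (α*(ζ + 4*η)))
        * (Real.sin (ζ + 6*η) * Real.sin (ζ + 2*η) / Real.sin (4*η)))
    (hS0 : S0 = fun ζ => Real.sin (ζ + 6*η) * Real.sin (ζ + 2*η)
        / (Real.sin ζ * Real.sin (ζ + 4*η))) :
    ∀ ξ ∈ Set.Ioo 0 (Real.pi - 6*η), ∀ x y : ℝ,
      y + S0 ξ * (x - 1) - R0 ξ
        = S0 ξ * (x + S0 (Real.pi - 6*η - ξ) * (y - 1) - R0 (Real.pi - 6*η - ξ)) :=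
  stmt10_general η h1 α hα R0 S0 hR0 hS0
end

section
/- Let η, λ, μ be real numbers in the admissible range 0 < η < λ < π − η, η − λ < μ < λ − η, set α = π/(π − 2η), and for ζ ∈ (0, π − λ − η) define: R_n(ζ) = (cot(ζ+λ−η) − cot(ζ) + α·cot(αζ) − α·cot(α(ζ+λ−η))) · sin(ζ+λ+η)sin(ζ+λ−η)sin(ζ+(λ−η+μ)/2)sin(ζ+(λ+3η+μ)/2) / (sin(2η)·(sin(ζ+λ+η)sin(ζ+λ−η) + sin(ζ+(λ−η+μ)/2)sin(ζ+(λ+3η+μ)/2))); S_n(ζ) = sin(ζ+λ+η)sin(ζ+λ−η)·(sin(ζ)sin(ζ+2η) + sin(ζ+(λ−η+μ)/2)sin(ζ+(λ+3η+μ)/2)) / (sin(ζ)sin(ζ+2η)·(sin(ζ+λ+η)sin(ζ+λ−η) + sin(ζ+(λ−η+μ)/2)sin(ζ+(λ+3η+μ)/2))); and let R_f and S̃_n be obtained from R_n and S_n respectively by replacing μ with −μ. Then for every ξ ∈ (0, π − λ − η) and all real x, y: x + S̃_n(π−λ−η−ξ)·(y−1) − R_f(π−λ−η−ξ) = K(ξ)·(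 y + S_n(ξ)·(x−1) − R_n(ξ) ), where K(ξ) = sin(ξ)sin(ξ+2η)·(sin(ξ+λ−η)sin(ξ+λ+η) + sin(ξ+(λ−η+μ)/2)sin(ξ+(λ+3η+μ)/2)) / ( sin(ξ+λ−η)sin(ξ+λ+η)·(sin(ξ)sin(ξ+2η) + sin(ξ+(λ−η+μ)/2)sin(ξ+(λ+3η+μ)/2)) ). -/
open Real

private lemma cot_pi_sub' (x : ℝ) : Real.cot (Real.pi - x) = -Real.cot x := by
  rw [Real.cot_eq_cos_div_sin, Real.cot_eq_cos_div_sin, Real.cos_pi_sub, Real.sin_pi_sub,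
    neg_div]

private lemma key_alg (a b c d e f s cb cd t x y : ℝ)
    (ha : a ≠ 0) (hb : b ≠ 0) (hc : c ≠ 0) (hd : d ≠ 0) (hs : s ≠ 0)
    (hP : a*b + e*f ≠ 0) (hQ : d*c + e*f ≠ 0) :
    x + (a*b*(d*c + e*f)/(d*c*(a*b+e*f)))*(y-1)
      - (cd/d - cb/b + t)*(a*b*f*e)/(s*(a*b+f*e))
    = (a*b*(c*d+e*f)/(c*d*(a*b+e*f))) *
      (y + (d*c*(a*b+e*f)/(a*b*(d*c+e*f)))*(x-1)
       - (((s+cd*c)/d)/c - ((s+cb*a)/b)/a + t)*(d*c*e*f)/(s*(d*c+e*f))) := by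
  have hP' : a*b + f*e ≠ 0 := by rwa [mul_comm f e]
  field_simp
  ring

/-- The tangent-line family obtained after x ↔ y exchange (μ → −μ) coincides with the
original 'normal' family, up to the factor K(ξ). -/
theorem stmt11 (η lam μ : ℝ) (h1 : 0 < η) (h2 : η < lam) (h3 : lam < Real.pi - η)
    (h4 : η - lam < μ) (h5 : μ < lam - η)
    (α : ℝ) (hα : α = Real.pi / (Real.pi - 2*η))
    (Rn Sn Rf Stn : ℝ → ℝ)
    (hRn : Rn = fun ζ => (Real.cot (ζ + lam - η) - Real.cot ζ + α * Real.cot (α*ζ)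
        - α * Real.cot (α*(ζ + lam - η)))
        * (Real.sin (ζ + lam + η) * Real.sin (ζ + lam - η) * Real.sin (ζ + (lam - η + μ)/2)
          * Real.sin (ζ + (lam + 3*η + μ)/2))
        / (Real.sin (2*η) * (Real.sin (ζ + lam + η) * Real.sin (ζ + lam - η)
          + Real.sin (ζ + (lam - η + μ)/2) * Real.sin (ζ + (lam + 3*η + μ)/2))))
    (hSn : Sn = fun ζ => Real.sin (ζ + lam + η) * Real.sin (ζ + lam - η)
        * (Real.sin ζ * Real.sin (ζ + 2*η)
          + Real.sin (ζ + (lam - η + μ)/2) * Real.sin (ζ + (lam + 3*η + μ)/2))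
        / (Real.sin ζ * Real.sin (ζ + 2*η) * (Real.sin (ζ + lam + η) * Real.sin (ζ + lam - η)
          + Real.sin (ζ + (lam - η + μ)/2) * Real.sin (ζ + (lam + 3*η + μ)/2))))
    (hRf : Rf = fun ζ => (Real.cot (ζ + lam - η) - Real.cot ζ + α * Real.cot (α*ζ)
        - α * Real.cot (α*(ζ + lam - η)))
        * (Real.sin (ζ + lam + η) * Real.sin (ζ + lam - η) * Real.sin (ζ + (lam - η - μ)/2)
          * Real.sin (ζ + (lam + 3*η - μ)/2))
        / (Real.sin (2*η) * (Real.sin (ζ + lam + η) * Real.sin (ζ + lam - η)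
          + Real.sin (ζ + (lam - η - μ)/2) * Real.sin (ζ + (lam + 3*η - μ)/2))))
    (hStn : Stn = fun ζ => Real.sin (ζ + lam + η) * Real.sin (ζ + lam - η)
        * (Real.sin ζ * Real.sin (ζ + 2*η)
          + Real.sin (ζ + (lam - η - μ)/2) * Real.sin (ζ + (lam + 3*η - μ)/2))
        / (Real.sin ζ * Real.sin (ζ + 2*η) * (Real.sin (ζ + lam + η) * Real.sin (ζ + lam - η)
          + Real.sin (ζ + (lam - η - μ)/2) * Real.sin (ζ + (lam + 3*η - μ)/2)))) :
    ∀ ξ ∈ Set.Ioo 0 (Real.pi - lam - η), ∀ x y : ℝ,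
      x + Stn (Real.pi - lam - η - ξ) * (y - 1) - Rf (Real.pi - lam - η - ξ)
        = (Real.sin ξ * Real.sin (ξ + 2*η)
            * (Real.sin (ξ + lam - η) * Real.sin (ξ + lam + η)
              + Real.sin (ξ + (lam - η + μ)/2) * Real.sin (ξ + (lam + 3*η + μ)/2))
          / (Real.sin (ξ + lam - η) * Real.sin (ξ + lam + η)
            * (Real.sin ξ * Real.sin (ξ + 2*η)
              + Real.sin (ξ + (lam - η + μ)/2) * Real.sin (ξ + (lam + 3*η + μ)/2))))
          * (y + Sn ξ * (x - 1) - Rn ξ) := by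
  rintro ξ ⟨hξ0, hξ1⟩ x y
  have hπ := Real.pi_pos
  have h2η : 2*η < Real.pi := by linarith
  have hπ2η : Real.pi - 2*η ≠ 0 := by intro h; linarith
  have hαπ : α * (Real.pi - 2*η) = Real.pi := by rw [hα]; field_simp
  -- positivity of all sines
  have ha : 0 < Real.sin ξ := Real.sin_pos_of_pos_of_lt_pi hξ0 (by linarith)
  have hb : 0 < Real.sin (ξ + 2*η) :=
    Real.sin_pos_of_pos_of_lt_pi (by linarith) (by linarith)
  have hc : 0 < Real.sin (ξ + lam - η) :=
    Real.sin_pos_of_pos_of_lt_pi (by linarith) (by linarith)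
  have hd : 0 < Real.sin (ξ + lam + η) :=
    Real.sin_pos_of_pos_of_lt_pi (by linarith) (by linarith)
  have he : 0 < Real.sin (ξ + (lam - η + μ)/2) :=
    Real.sin_pos_of_pos_of_lt_pi (by linarith) (by linarith)
  have hf : 0 < Real.sin (ξ + (lam + 3*η + μ)/2) :=
    Real.sin_pos_of_pos_of_lt_pi (by linarith) (by linarith)
  have hs : 0 < Real.sin (2*η) := Real.sin_pos_of_pos_of_lt_pi (by linarith) h2η
  have hP : Real.sin ξ * Real.sin (ξ + 2*η)
      + Real.sin (ξ + (lam - η + μ)/2) * Real.sin (ξ + (lam + 3*η + μ)/2) ≠ 0 :=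
    (add_pos (mul_pos ha hb) (mul_pos he hf)).ne'
  have hQ : Real.sin (ξ + lam + η) * Real.sin (ξ + lam - η)
      + Real.sin (ξ + (lam - η + μ)/2) * Real.sin (ξ + (lam + 3*η + μ)/2) ≠ 0 :=
    (add_pos (mul_pos hd hc) (mul_pos he hf)).ne'
  -- the cosine identities
  have hca : Real.cos ξ
      = (Real.sin (2*η) + Real.cos (ξ + 2*η) * Real.sin ξ) / Real.sin (ξ + 2*η) := by
    rw [eq_div_iff hb.ne']
    have h := Real.sin_sub (ξ + 2*η) ξ
    rw [show ξ + 2*η - ξ = 2*η by ring] at h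
    linear_combination -h
  have hcc : Real.cos (ξ + lam - η)
      = (Real.sin (2*η) + Real.cos (ξ + lam + η) * Real.sin (ξ + lam - η))
        / Real.sin (ξ + lam + η) := by
    rw [eq_div_iff hd.ne']
    have h := Real.sin_sub (ξ + lam + η) (ξ + lam - η)
    rw [show ξ + lam + η - (ξ + lam - η) = 2*η by ring] at h
    linear_combination -h
  simp only [hRn, hSn, hRf, hStn]
  rw [show Real.pi - lam - η - ξ + lam + η = Real.pi - ξ by ring,
      show Real.pi - lam - η - ξ + lam - η = Real.pi - (ξ + 2*η) by ring,
      show Real.pi - lam - η - ξ + (lam - η - μ)/2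
        = Real.pi - (ξ + (lam + 3*η + μ)/2) by ring,
      show Real.pi - lam - η - ξ + (lam + 3*η - μ)/2
        = Real.pi - (ξ + (lam - η + μ)/2) by ring,
      show Real.pi - lam - η - ξ + 2*η = Real.pi - (ξ + lam - η) by ring,
      show Real.pi - lam - η - ξ = Real.pi - (ξ + lam + η) by ring,
      show α * (Real.pi - (ξ + 2*η)) = Real.pi - α * ξ by linear_combination hαπ,
      show α * (Real.pi - (ξ + lam + η)) = Real.pi - α * (ξ + lam - η) by
        linear_combination hαπ]
  simp only [Real.sin_pi_sub, cot_pi_sub']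
  rw [Real.cot_eq_cos_div_sin (ξ + 2*η), Real.cot_eq_cos_div_sin (ξ + lam + η),
      Real.cot_eq_cos_div_sin (ξ + lam - η), Real.cot_eq_cos_div_sin ξ,
      hca, hcc]
  linear_combination key_alg (Real.sin ξ) (Real.sin (ξ + 2*η)) (Real.sin (ξ + lam - η))
    (Real.sin (ξ + lam + η)) (Real.sin (ξ + (lam - η + μ)/2))
    (Real.sin (ξ + (lam + 3*η + μ)/2)) (Real.sin (2*η)) (Real.cos (ξ + 2*η))
    (Real.cos (ξ + lam + η)) (α * Real.cot (α*ξ) - α * Real.cot (α*(ξ + lam - η))) x y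
    ha.ne' hb.ne' hc.ne' hd.ne' hs.ne' hP hQ
end

section
/- Let η, λ, μ be real numbers in the admissible range 0 < η < λ < π − η, η − λ < μ < λ − η, and set α = π/(π − 2η). Define R_n(ξ) = (cot(ξ+λ−η) − cot(ξ) + α·cot(αξ) − α·cot(α(ξ+λ−η))) · sin(ξ+λ+η)sin(ξ+λ−η)sin(ξ+(λ−η+μ)/2)sin(ξ+(λ+3η+μ)/2) / (sin(2η)·(sin(ξ+λ+η)sin(ξ+λ−η) + sin(ξ+(λ−η+μ)/2)sin(ξ+(λ+3η+μ)/2))); S_s(ξ) = sin(ξ+λ+η)sin(ξ+λ−η)sin(2ξ+(λ−η+μ)/2)sin((λ+3η+μ)/2) / (sin(2η−ξ)sin(ξ)·(sin(ξ+λ+η)sin(ξ+λ−η) + sin(ξ+(λ−η+μ)/2)sin(ξ+(λ+3η+μ)/2))); and let R_f, S_f be obtained from R_n, S_s by replacing μ with −μ. Then at ξ0 = −(λ−η+μ)/2 one has R_n(ξ0) = 0 and S_s(ξ0) = 1, and at ξ1 = −(λ−η−μ)/2 one has R_f(ξ1) = 0 and S_f(ξ1) = 1 (in particular all denominators occurring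 in these four evaluations are nonzero). -/
/-- At the junction between the 'shear' and 'final' portions, the common tangent line is the
second diagonal: R_n and R_f vanish and S_s and S_f equal 1 at the endpoint parameters,
all occurring denominators being nonzero. -/
theorem stmt12 (η lam μ : ℝ) (h1 : 0 < η) (h2 : η < lam) (h3 : lam < Real.pi - η)
    (h4 : η - lam < μ) (h5 : μ < lam - η)
    (α : ℝ) (hα : α = Real.pi / (Real.pi - 2*η))
    (Rn Ss Rf Sf : ℝ → ℝ)
    (hRn : Rn = fun ξ => (Real.cot (ξ + lam - η) - Real.cot ξ + α * Real.cot (α*ξ)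
        - α * Real.cot (α*(ξ + lam - η)))
        * (Real.sin (ξ + lam + η) * Real.sin (ξ + lam - η) * Real.sin (ξ + (lam - η + μ)/2)
          * Real.sin (ξ + (lam + 3*η + μ)/2))
        / (Real.sin (2*η) * (Real.sin (ξ + lam + η) * Real.sin (ξ + lam - η)
          + Real.sin (ξ + (lam - η + μ)/2) * Real.sin (ξ + (lam + 3*η + μ)/2))))
    (hSs : Ss = fun ξ => Real.sin (ξ + lam + η) * Real.sin (ξ + lam - η)
        * Real.sin (2*ξ + (lam - η + μ)/2) * Real.sin ((lam + 3*η + μ)/2)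
        / (Real.sin (2*η - ξ) * Real.sin ξ * (Real.sin (ξ + lam + η) * Real.sin (ξ + lam - η)
          + Real.sin (ξ + (lam - η + μ)/2) * Real.sin (ξ + (lam + 3*η + μ)/2))))
    (hRf : Rf = fun ξ => (Real.cot (ξ + lam - η) - Real.cot ξ + α * Real.cot (α*ξ)
        - α * Real.cot (α*(ξ + lam - η)))
        * (Real.sin (ξ + lam + η) * Real.sin (ξ + lam - η) * Real.sin (ξ + (lam - η - μ)/2)
          * Real.sin (ξ + (lam + 3*η - μ)/2))
        / (Real.sin (2*η) * (Real.sin (ξ + lam + η) * Real.sin (ξ + lam - η)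
          + Real.sin (ξ + (lam - η - μ)/2) * Real.sin (ξ + (lam + 3*η - μ)/2))))
    (hSf : Sf = fun ξ => Real.sin (ξ + lam + η) * Real.sin (ξ + lam - η)
        * Real.sin (2*ξ + (lam - η - μ)/2) * Real.sin ((lam + 3*η - μ)/2)
        / (Real.sin (2*η - ξ) * Real.sin ξ * (Real.sin (ξ + lam + η) * Real.sin (ξ + lam - η)
          + Real.sin (ξ + (lam - η - μ)/2) * Real.sin (ξ + (lam + 3*η - μ)/2))))
    (ξ0 ξ1 : ℝ) (hξ0 : ξ0 = -((lam - η + μ)/2)) (hξ1 : ξ1 = -((lam - η - μ)/2)) :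
    Real.sin (2*η) ≠ 0 ∧
    Real.sin ξ0 ≠ 0 ∧ Real.sin (ξ0 + lam - η) ≠ 0 ∧
    Real.sin (α*ξ0) ≠ 0 ∧ Real.sin (α*(ξ0 + lam - η)) ≠ 0 ∧
    Real.sin (2*η - ξ0) ≠ 0 ∧
    (Real.sin (ξ0 + lam + η) * Real.sin (ξ0 + lam - η)
      + Real.sin (ξ0 + (lam - η + μ)/2) * Real.sin (ξ0 + (lam + 3*η + μ)/2)) ≠ 0 ∧
    Real.sin ξ1 ≠ 0 ∧ Real.sin (ξ1 + lam - η) ≠ 0 ∧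
    Real.sin (α*ξ1) ≠ 0 ∧ Real.sin (α*(ξ1 + lam - η)) ≠ 0 ∧
    Real.sin (2*η - ξ1) ≠ 0 ∧
    (Real.sin (ξ1 + lam + η) * Real.sin (ξ1 + lam - η)
      + Real.sin (ξ1 + (lam - η - μ)/2) * Real.sin (ξ1 + (lam + 3*η - μ)/2)) ≠ 0 ∧
    Rn ξ0 = 0 ∧ Ss ξ0 = 1 ∧ Rf ξ1 = 0 ∧ Sf ξ1 = 1 := by
  have hπ : (0:ℝ) < Real.pi := Real.pi_pos
  set a := (lam - η + μ)/2 with ha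
  set b := (lam - η - μ)/2 with hb
  set c := (lam + 3*η + μ)/2 with hc
  set d := (lam + 3*η - μ)/2 with hd
  have hP2 : 0 < Real.pi - 2*η := by linarith
  have hapos : 0 < a := by rw [ha]; linarith
  have haP : a < Real.pi - 2*η := by rw [ha]; linarith
  have hbpos : 0 < b := by rw [hb]; linarith
  have hbP : b < Real.pi - 2*η := by rw [hb]; linarith
  have hsa : 0 < Real.sin a := Real.sin_pos_of_pos_of_lt_pi hapos (by linarith)
  have hsb : 0 < Real.sin b := Real.sin_pos_of_pos_of_lt_pi hbpos (by linarith)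
  have hsc : 0 < Real.sin c :=
    Real.sin_pos_of_pos_of_lt_pi (by rw [hc]; linarith) (by rw [hc]; linarith)
  have hsd : 0 < Real.sin d :=
    Real.sin_pos_of_pos_of_lt_pi (by rw [hd]; linarith) (by rw [hd]; linarith)
  have hs2η : 0 < Real.sin (2*η) :=
    Real.sin_pos_of_pos_of_lt_pi (by linarith) (by linarith)
  have hαpos : 0 < α := by rw [hα]; positivity
  have hαid : α * (Real.pi - 2*η) = Real.pi := by
    rw [hα]; field_simp
  have hsαa : 0 < Real.sin (α*a) :=
    Real.sin_pos_of_pos_of_lt_pi (by positivity)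
      (by calc α*a < α*(Real.pi - 2*η) := by exact mul_lt_mul_of_pos_left haP hαpos
        _ = Real.pi := hαid)
  have hsαb : 0 < Real.sin (α*b) :=
    Real.sin_pos_of_pos_of_lt_pi (by positivity)
      (by calc α*b < α*(Real.pi - 2*η) := by exact mul_lt_mul_of_pos_left hbP hαpos
        _ = Real.pi := hαid)
  -- argument identities at ξ0
  have e1 : ξ0 = -a := by rw [hξ0, ha]
  have e2 : ξ0 + lam - η = b := by rw [hξ0, hb]; ring
  have e3 : ξ0 + lam + η = d := by rw [hξ0, hd]; ring
  have e4 : ξ0 + (lam - η + μ)/2 = 0 := by rw [hξ0]; ring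
  have e5 : ξ0 + (lam + 3*η + μ)/2 = 2*η := by rw [hξ0]; ring
  have e6 : 2*η - ξ0 = c := by rw [hξ0, hc]; ring
  have e7 : 2*ξ0 + (lam - η + μ)/2 = -a := by rw [hξ0, ha]; ring
  have e8 : (lam + 3*η + μ)/2 = c := hc.symm
  -- argument identities at ξ1
  have f1 : ξ1 = -b := by rw [hξ1, hb]
  have f2 : ξ1 + lam - η = a := by rw [hξ1, ha]; ring
  have f3 : ξ1 + lam + η = c := by rw [hξ1, hc]; ring
  have f4 : ξ1 + (lam - η - μ)/2 = 0 := by rw [hξ1]; ring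
  have f5 : ξ1 + (lam + 3*η - μ)/2 = 2*η := by rw [hξ1]; ring
  have f6 : 2*η - ξ1 = d := by rw [hξ1, hd]; ring
  have f7 : 2*ξ1 + (lam - η - μ)/2 = -b := by rw [hξ1, hb]; ring
  have f8 : (lam + 3*η - μ)/2 = d := hd.symm
  refine ⟨hs2η.ne', ?_, ?_, ?_, ?_, ?_, ?_, ?_, ?_, ?_, ?_, ?_, ?_, ?_, ?_, ?_, ?_⟩
  · rw [e1, Real.sin_neg]; exact neg_ne_zero.mpr hsa.ne'
  · rw [show ξ0 + lam - η = b from e2]; exact hsb.ne'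
  · rw [e1, mul_neg, Real.sin_neg]; exact neg_ne_zero.mpr hsαa.ne'
  · rw [show α*(ξ0 + lam - η) = α*b by rw [e2]]; exact hsαb.ne'
  · rw [e6]; exact hsc.ne'
  · rw [show ξ0 + lam - η = b from e2, e3, e4, e5, Real.sin_zero]
    have : Real.sin d * Real.sin b + 0 * Real.sin (2*η) = Real.sin d * Real.sin b := by ring
    rw [this]; positivity
  · rw [f1, Real.sin_neg]; exact neg_ne_zero.mpr hsb.ne'
  · rw [show ξ1 + lam - η = a from f2]; exact hsa.ne'
  · rw [f1, mul_neg, Real.sin_neg]; exact neg_ne_zero.mpr hsαb.ne'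
  · rw [show α*(ξ1 + lam - η) = α*a by rw [f2]]; exact hsαa.ne'
  · rw [f6]; exact hsd.ne'
  · rw [show ξ1 + lam - η = a from f2, f3, f4, f5, Real.sin_zero]
    have : Real.sin c * Real.sin a + 0 * Real.sin (2*η) = Real.sin c * Real.sin a := by ring
    rw [this]; positivity
  · rw [hRn]; simp only
    rw [show ξ0 + (lam - η + μ)/2 = 0 from e4, Real.sin_zero]
    ring
  · rw [hSs]; simp only
    rw [show ξ0 + lam - η = b from e2, e3, e4, e5, e6, e7, Real.sin_zero,
      Real.sin_neg, e1, Real.sin_neg]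
    field_simp
    ring
  · rw [hRf]; simp only
    rw [show ξ1 + (lam - η - μ)/2 = 0 from f4, Real.sin_zero]
    ring
  · rw [hSf]; simp only
    rw [show ξ1 + lam - η = a from f2, f3, f4, f5, f6, f7, Real.sin_zero,
      Real.sin_neg, f1, Real.sin_neg]
    field_simp
    ring
end

section
/- Set η = π/8 and α = π/(π − 2η) = 4/3. For ξ ∈ (0, π/4) define R0(ξ) = (cot(ξ+π/2) − cot(ξ) + (4/3)·cot(4ξ/3) − (4/3)·cot((4/3)(ξ+π/2))) · sin(ξ+3π/4)·sin(ξ+π/4)/sin(π/2) and S0(ξ) = sin(ξ+3π/4)·sin(ξ+π/4)/(sin(ξ)·sin(ξ+π/2)). Then for every ξ ∈ (0, π/4): deriv S0 ξ ≠ 0, 1 + (deriv R0 ξ)/(deriv S0 ξ) = x*(ξ), and R0(ξ) − S0(ξ)·(deriv R0 ξ)/(deriv S0 ξ) = y*(ξ), where x*(ξ) = (1/18)·( 3·(5cos(2ξ/3) + cos(10ξ/3)) − √3·(5sin(2ξ/3) − sin(10ξ/3)) ) and y*(ξ) = (1/18)·( √3·(5cos(2ξ/3) − cos(10ξ/3))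 + 3·(5sin(2ξ/3) + sin(10ξ/3)) ). -/
/-!
On `(0, π/4)` one has `S0 ξ = cot 2ξ` and, by the product formula
`4 sin a sin (π/3 - a) sin (π/3 + a) = sin 3a` applied at `a = 4ξ/3`,
`R0 ξ = N (2ξ) / sin 2ξ` with `N = arcticSupport`.
So the lines `y = R0 ξ - S0 ξ (x - 1)` are the lines `(x - 1) cos t + y sin t = N t`, `t = 2ξ`,
whose envelope is `(x - 1, y) = (N cos t - N' sin t, N sin t + N' cos t)`; product-to-sum formulas
in the angles `2ξ` and `4ξ/3` turn this into the stated closed form.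
-/

open Real Filter Topology

lemma sin_add_three_pi_div_four_mul_sin_add_pi_div_four (y : ℝ) :
    sin (y + 3 * π / 4) * sin (y + π / 4) = cos (2 * y) / 2 := by
  rw [show y + 3 * π / 4 = y + π / 4 + π / 2 by ring, sin_add_pi_div_two,
    ← sin_add_pi_div_two (2 * y), show 2 * y + π / 2 = 2 * (y + π / 4) by ring, sin_two_mul]
  ring

lemma cot_sub_cot_add {x b : ℝ} (hx : sin x ≠ 0) (hxb : sin (x + b) ≠ 0) :
    cot x - cot (x + b) = sin b / (sin x * sin (x + b)) := by
  rw [cot_eq_cos_div_sin, cot_eq_cos_div_sin, div_sub_div _ _ hx hxb,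
    show sin b = sin (x + b - x) by ring_nf, sin_sub]
  ring_nf

lemma four_mul_sin_mul_sin_pi_div_three_sub_mul_sin_pi_div_three_add (a : ℝ) :
    4 * sin a * sin (π / 3 - a) * sin (π / 3 + a) = sin (3 * a) := by
  rw [sin_sub, sin_add, sin_pi_div_three, cos_pi_div_three, sin_three_mul]
  have h3 : √3 ^ 2 = 3 := sq_sqrt (by norm_num)
  linear_combination (sin a * cos a ^ 2) * h3 + (3 * sin a) * sin_sq_add_cos_sq a

/-- The envelope of the lines `X cos θ + Y sin θ = N θ`, i.e. `Y = R - S X` with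
`R = N θ / sin θ` and `S = cot θ`, under any regular parametrisation `θ`. -/
theorem envelope_of_lines {N θ R S : ℝ → ℝ} {N' θ' ξ : ℝ} (hN : HasDerivAt N N' (θ ξ))
    (hθ : HasDerivAt θ θ' ξ) (hθ' : θ' ≠ 0) (hsin : sin (θ ξ) ≠ 0)
    (hR : R =ᶠ[𝓝 ξ] fun s => N (θ s) / sin (θ s))
    (hS : S =ᶠ[𝓝 ξ] fun s => cos (θ s) / sin (θ s)) :
    deriv S ξ ≠ 0 ∧
      deriv R ξ / deriv S ξ = N (θ ξ) * cos (θ ξ) - N' * sin (θ ξ) ∧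
      R ξ - S ξ * (deriv R ξ / deriv S ξ) = N (θ ξ) * sin (θ ξ) + N' * cos (θ ξ) := by
  have hsinθ : HasDerivAt (fun s => sin (θ s)) (cos (θ ξ) * θ') ξ :=
    (hasDerivAt_sin _).comp ξ hθ
  have hcosθ : HasDerivAt (fun s => cos (θ s)) (-sin (θ ξ) * θ') ξ :=
    (hasDerivAt_cos _).comp ξ hθ
  have hNθ : HasDerivAt (fun s => N (θ s)) (N' * θ') ξ := hN.comp ξ hθ
  have hS' : deriv S ξ = -θ' / sin (θ ξ) ^ 2 := by
    rw [hS.deriv_eq, (hcosθ.fun_div hsinθ hsin).deriv]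
    field_simp
    linear_combination -sin_sq_add_cos_sq (θ ξ)
  have hR' : deriv R ξ = θ' * (N' * sin (θ ξ) - N (θ ξ) * cos (θ ξ)) / sin (θ ξ) ^ 2 := by
    rw [hR.deriv_eq, (hNθ.fun_div hsinθ hsin).deriv]
    ring
  have hratio : deriv R ξ / deriv S ξ = N (θ ξ) * cos (θ ξ) - N' * sin (θ ξ) := by
    rw [hR', hS']
    field_simp
    ring
  have hS'_ne : deriv S ξ ≠ 0 := by
    rw [hS']
    exact div_ne_zero (neg_ne_zero.mpr hθ') (pow_ne_zero 2 hsin)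
  refine ⟨hS'_ne, hratio, ?_⟩
  rw [hratio, hR.eq_of_nhds, hS.eq_of_nhds]
  field_simp
  linear_combination (-N (θ ξ)) * sin_sq_add_cos_sq (θ ξ)

noncomputable def arcticSupport (t : ℝ) : ℝ := cos (2 * t / 3) + sin (2 * t / 3) / √3 - cos t

noncomputable def arcticSupportDeriv (t : ℝ) : ℝ :=
  -(2 / 3) * sin (2 * t / 3) + 2 / 3 * cos (2 * t / 3) / √3 + sin t

lemma hasDerivAt_arcticSupport (t : ℝ) : HasDerivAt arcticSupport (arcticSupportDeriv t) t := by
  have hlin : HasDerivAt (fun s : ℝ => 2 * s / 3) (2 / 3) t := by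
    simpa using ((hasDerivAt_id t).const_mul 2).div_const 3
  have hcos : HasDerivAt (fun s => cos (2 * s / 3)) (-sin (2 * t / 3) * (2 / 3)) t :=
    (hasDerivAt_cos _).comp t hlin
  have hsin : HasDerivAt (fun s => sin (2 * s / 3)) (cos (2 * t / 3) * (2 / 3)) t :=
    (hasDerivAt_sin _).comp t hlin
  exact ((hcos.add (hsin.div_const √3)).sub (hasDerivAt_cos t)).congr_deriv
    (by rw [arcticSupportDeriv]; ring)

lemma cot_combination_eq_arcticSupport_div {y : ℝ} (hy : y ∈ Set.Ioo 0 (π / 4)) :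
    (cot (y + π / 2) - cot y + 4 / 3 * cot (4 * y / 3) - 4 / 3 * cot (4 / 3 * (y + π / 2)))
        * (sin (y + 3 * π / 4) * sin (y + π / 4) / sin (π / 2))
      = arcticSupport (2 * y) / sin (2 * y) := by
  obtain ⟨hy0, hy1⟩ := hy
  set u := 4 * y / 3 with hu
  have hsy : 0 < sin y := sin_pos_of_pos_of_lt_pi hy0 (by linarith)
  have hcy : 0 < cos y := cos_pos_of_mem_Ioo ⟨by linarith, by linarith⟩
  have hsu : 0 < sin u := sin_pos_of_pos_of_lt_pi (by positivity) (by linarith)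
  have hsu' : 0 < sin (π / 3 - u) := sin_pos_of_pos_of_lt_pi (by linarith) (by linarith)
  have hc2y : 0 < cos (2 * y) := cos_pos_of_mem_Ioo ⟨by linarith, by linarith⟩
  have hs2y : 0 < sin (2 * y) := sin_pos_of_pos_of_lt_pi (by positivity) (by linarith)
  have hshift : sin (u + 2 * π / 3) = sin (π / 3 - u) := by
    rw [← sin_pi_sub]; ring_nf
  have hcot₁ : cot y - cot (y + π / 2) = 1 / (sin y * cos y) := by
    rw [cot_sub_cot_add hsy.ne' (by rw [sin_add_pi_div_two]; exact hcy.ne'),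
      sin_pi_div_two, sin_add_pi_div_two]
  have htriple :
      4 * sin u * sin (π / 3 - u) * sin (π / 3 + u) = 2 * sin (2 * y) * cos (2 * y) := by
    rw [four_mul_sin_mul_sin_pi_div_three_sub_mul_sin_pi_div_three_add,
      show 3 * u = 2 * (2 * y) by rw [hu]; ring, sin_two_mul]
  have hcot₂ : cot u - cot (u + 2 * π / 3)
      = √3 * sin (π / 3 + u) / (sin (2 * y) * cos (2 * y)) := by
    rw [cot_sub_cot_add hsu.ne' (by rw [hshift]; exact hsu'.ne'), hshift,
      show 2 * π / 3 = π - π / 3 by ring, sin_pi_sub, sin_pi_div_three,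
      div_eq_div_iff (by positivity) (by positivity)]
    linear_combination (-√3 / 4) * htriple
  rw [sin_add_three_pi_div_four_mul_sin_add_pi_div_four, sin_pi_div_two, div_one,
    show 4 / 3 * (y + π / 2) = u + 2 * π / 3 by rw [hu]; ring,
    show cot (y + π / 2) - cot y + 4 / 3 * cot u - 4 / 3 * cot (u + 2 * π / 3)
      = -(cot y - cot (y + π / 2)) + 4 / 3 * (cot u - cot (u + 2 * π / 3)) by ring,
    hcot₁, hcot₂, sin_add, sin_pi_div_three, cos_pi_div_three, arcticSupport,
    show 2 * (2 * y) / 3 = u by rw [hu]; ring, sin_two_mul]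
  have h3 : √3 ^ 2 = 3 := sq_sqrt (by norm_num)
  field_simp
  linear_combination 4 * (√3 * cos u + sin u) * h3

lemma one_add_arcticSupport_mul_cos_sub (ξ : ℝ) :
    1 + (arcticSupport (2 * ξ) * cos (2 * ξ) - arcticSupportDeriv (2 * ξ) * sin (2 * ξ))
      = 1 / 18 * (3 * (5 * cos (2 * ξ / 3) + cos (10 * ξ / 3))
          - √3 * (5 * sin (2 * ξ / 3) - sin (10 * ξ / 3))) := by
  rw [arcticSupport, arcticSupportDeriv, show 2 * (2 * ξ) / 3 = 4 * ξ / 3 by ring,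
    show 2 * ξ / 3 = 2 * ξ - 4 * ξ / 3 by ring, show 10 * ξ / 3 = 2 * ξ + 4 * ξ / 3 by ring,
    cos_sub, cos_add, sin_sub, sin_add]
  generalize 4 * ξ / 3 = A
  generalize 2 * ξ = B
  have h3 : √3 ^ 2 = 3 := sq_sqrt (by norm_num)
  field_simp
  linear_combination (12 * cos A * sin B - 18 * cos B * sin A) * h3
    - 54 * √3 * sin_sq_add_cos_sq B

lemma arcticSupport_mul_sin_add (ξ : ℝ) :
    arcticSupport (2 * ξ) * sin (2 * ξ) + arcticSupportDeriv (2 * ξ) * cos (2 * ξ)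
      = 1 / 18 * (√3 * (5 * cos (2 * ξ / 3) - cos (10 * ξ / 3))
          + 3 * (5 * sin (2 * ξ / 3) + sin (10 * ξ / 3))) := by
  rw [arcticSupport, arcticSupportDeriv, show 2 * (2 * ξ) / 3 = 4 * ξ / 3 by ring,
    show 2 * ξ / 3 = 2 * ξ - 4 * ξ / 3 by ring, show 10 * ξ / 3 = 2 * ξ + 4 * ξ / 3 by ring,
    cos_sub, cos_add, sin_sub, sin_add]
  generalize 4 * ξ / 3 = A
  generalize 2 * ξ = B
  have h3 : √3 ^ 2 = 3 := sq_sqrt (by norm_num)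
  field_simp
  linear_combination (-12 * cos A * cos B - 18 * sin A * sin B) * h3

/-- Explicit closed form of the 'normal' portion of the arctic curve of the uniform 20V model
(η = π/8, λ = 5η, μ = 0). -/
theorem stmt13 (R0 S0 : ℝ → ℝ)
    (hR0 : R0 = fun ξ => (Real.cot (ξ + Real.pi/2) - Real.cot ξ + (4/3) * Real.cot (4*ξ/3)
        - (4/3) * Real.cot ((4/3)*(ξ + Real.pi/2)))
        * (Real.sin (ξ + 3*Real.pi/4) * Real.sin (ξ + Real.pi/4) / Real.sin (Real.pi/2)))
    (hS0 : S0 = fun ξ => Real.sin (ξ + 3*Real.pi/4) * Real.sin (ξ + Real.pi/4)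
        / (Real.sin ξ * Real.sin (ξ + Real.pi/2))) :
    ∀ ξ ∈ Set.Ioo 0 (Real.pi/4),
      deriv S0 ξ ≠ 0 ∧
      1 + deriv R0 ξ / deriv S0 ξ
        = (1/18) * (3*(5*Real.cos (2*ξ/3) + Real.cos (10*ξ/3))
            - Real.sqrt 3 * (5*Real.sin (2*ξ/3) - Real.sin (10*ξ/3))) ∧
      R0 ξ - S0 ξ * (deriv R0 ξ / deriv S0 ξ)
        = (1/18) * (Real.sqrt 3 * (5*Real.cos (2*ξ/3) - Real.cos (10*ξ/3))
            + 3*(5*Real.sin (2*ξ/3) + Real.sin (10*ξ/3))) := by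
  intro ξ hξ
  have hR : R0 =ᶠ[𝓝 ξ] fun y => arcticSupport (2 * y) / sin (2 * y) := by
    filter_upwards [isOpen_Ioo.mem_nhds hξ] with y hy
    rw [hR0]
    exact (cot_combination_eq_arcticSupport_div hy)
  have hS : S0 =ᶠ[𝓝 ξ] fun y => cos (2 * y) / sin (2 * y) := by
    filter_upwards with y
    rw [hS0]
    beta_reduce
    rw [sin_add_three_pi_div_four_mul_sin_add_pi_div_four, sin_add_pi_div_two, sin_two_mul,
      div_div]
    ring_nf
  have hsin : sin (2 * ξ) ≠ 0 :=
    (sin_pos_of_pos_of_lt_pi (by linarith [hξ.1]) (by linarith [hξ.2, pi_pos])).ne'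
  have h2 : HasDerivAt (fun y : ℝ => 2 * y) 2 ξ := by
    simpa using (hasDerivAt_id ξ).const_mul (2 : ℝ)
  obtain ⟨hS', hx, hy⟩ := envelope_of_lines (hasDerivAt_arcticSupport (2 * ξ)) h2 two_ne_zero
    hsin hR hS
  refine ⟨hS', ?_, ?_⟩
  · rw [hx, one_add_arcticSupport_mul_cos_sub]
  · rw [hy, arcticSupport_mul_sin_add]
end

section
/- Let η, ξ be real numbers with 0 < η < π/4 and 0 < ξ < 2η. Set γ = 1 + 2cos(4η) and τ = sin(2η+ξ)/sin(2η−ξ). Then τ ≠ 1, τ + γ ≠ 0, and τ·(1 + γ)/((τ − 1)·(τ + γ)) = sin(2η+ξ)·sin(2η−ξ)/(sin(ξ)·sin(4η−ξ)). -/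
/-!
With `c = cos 2η`, `s± = sin (2η ± ξ)` and `τ = s₊ / s₋`, the addition formulas give
`s₊ - s₋ = 2 c sin ξ` and `s₊ + γ s₋ = 2 c sin (4η - ξ)`, while `1 + γ = 4 c²`. Hence
`τ - 1` and `τ + γ` are `2 c sin ξ / s₋` and `2 c sin (4η - ξ) / s₋`, both positive on the given
range, and the factors `4 c²` cancel in the slope.
-/

open Real

lemma sin_add_sub_sin_sub (a ξ : ℝ) : sin (a + ξ) - sin (a - ξ) = 2 * cos a * sin ξ := by
  rw [sin_add, sin_sub]
  ring

lemma one_add_two_cos_two_mul_eq (a : ℝ) : 1 + (1 + 2 * cos (2 * a)) = 4 * cos a ^ 2 := by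
  rw [cos_two_mul]
  ring

lemma sin_add_add_one_add_two_cos_two_mul_mul_sin_sub (a ξ : ℝ) :
    sin (a + ξ) + (1 + 2 * cos (2 * a)) * sin (a - ξ) = 2 * cos a * sin (2 * a - ξ) := by
  rw [show 2 * a - ξ = a + (a - ξ) by ring, sin_add a (a - ξ), cos_two_mul, sin_add, sin_sub,
    cos_sub]
  linear_combination (-2 * cos a * sin ξ) * sin_sq_add_cos_sq a

lemma slope_eq_of_factorization {K : Type*} [Field K] [CharZero K] {p q u v c γ : K}
    (hq : q ≠ 0) (hu : u ≠ 0) (hv : v ≠ 0) (hc : c ≠ 0)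
    (hsub : p - q = 2 * c * u) (hadd : p + γ * q = 2 * c * v) (hγ : 1 + γ = 4 * c ^ 2) :
    p / q ≠ 1 ∧ p / q + γ ≠ 0 ∧
      p / q * (1 + γ) / ((p / q - 1) * (p / q + γ)) = p * q / (u * v) := by
  have hdiv_sub : p / q - 1 = 2 * c * u / q := by rw [← hsub]; field_simp
  have hdiv_add : p / q + γ = 2 * c * v / q := by rw [← hadd]; field_simp
  refine ⟨?_, ?_, ?_⟩
  · rw [← sub_ne_zero, hdiv_sub]
    exact div_ne_zero (by simp [hc, hu]) hq
  · rw [hdiv_add]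
    exact div_ne_zero (by simp [hc, hv]) hq
  · rw [hdiv_sub, hdiv_add, hγ]
    field_simp
    ring

/-- Closed parametric form of the slope function β(ξ) for the QTHADT model. -/
theorem stmt16 (η ξ : ℝ) (h1 : 0 < η) (h2 : η < Real.pi/4) (h3 : 0 < ξ) (h4 : ξ < 2*η)
    (γ τ : ℝ) (hγ : γ = 1 + 2*Real.cos (4*η))
    (hτ : τ = Real.sin (2*η + ξ) / Real.sin (2*η - ξ)) :
    τ ≠ 1 ∧ τ + γ ≠ 0 ∧
    τ * (1 + γ) / ((τ - 1) * (τ + γ))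
      = Real.sin (2*η + ξ) * Real.sin (2*η - ξ) / (Real.sin ξ * Real.sin (4*η - ξ)) := by
  have h4η : 4 * η = 2 * (2 * η) := by ring
  have hsm : 0 < sin (2 * η - ξ) := sin_pos_of_pos_of_lt_pi (by linarith) (by linarith)
  have hsξ : 0 < sin ξ := sin_pos_of_pos_of_lt_pi h3 (by linarith)
  have hs4 : 0 < sin (4 * η - ξ) := sin_pos_of_pos_of_lt_pi (by linarith) (by linarith)
  have hc : 0 < cos (2 * η) := cos_pos_of_mem_Ioo ⟨by linarith, by linarith⟩
  subst hγ hτ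
  rw [h4η] at hs4 ⊢
  exact slope_eq_of_factorization hsm.ne' hsξ.ne' hs4.ne' hc.ne' (sin_add_sub_sin_sub _ _)
    (sin_add_add_one_add_two_cos_two_mul_mul_sin_sub _ _) (one_add_two_cos_two_mul_eq _)
end

section
/- Let η be a real number with 0 < η < π/4, set α = π/(π − 2η), and for ζ ∈ (0, 2η) define ρ(ζ) = ( α·(cot(αζ) + cot(α(2η−ζ))) − cot(ζ) − cot(4η−ζ) ) · sin(ζ+2η)·sin(2η−ζ)/sin(4η) and β(ζ) = sin(2η+ζ)·sin(2η−ζ)/(sin(ζ)·sin(4η−ζ)). Let ξ ∈ (0, 2η) be such that deriv β ξ ≠ 0 and deriv β (2η−ξ) ≠ 0. Then ρ(ξ) − β(ξ)·(deriv ρ ξ)/(deriv β ξ) = 1 + (deriv ρ (2η−ξ))/(deriv β (2η−ξ)). -/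
/-!
The curve is governed by two functional equations under the reflection `ζ ↦ 2η - ζ`:
`β ζ · β (2η - ζ) = 1` and `(ρ (2η - ζ) - 1) · β ζ = ρ ζ - 1`. Both come from writing
`β ζ = Q ζ / Q (2η - ζ)` and `ρ = P · Q - β` with `Q ζ = sin (ζ + 2η) sin (2η - ζ) / sin 4η`
and `P ζ = α (cot αζ + cot α(2η - ζ))` symmetric under the reflection, using
`cot a + cot b = sin (a + b) / (sin a sin b)`. Differentiating the two equations at `ξ` and
eliminating `β (2η - ξ)`, `ρ (2η - ξ)` and their derivatives gives the symmetry; the value of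
`α` only enters through the differentiability of `ρ`.
-/

open Real Filter Topology Set

theorem sub_mul_deriv_div_eq_one_add_deriv_div {ρ β : ℝ → ℝ} {c ξ : ℝ}
    (hβ : (fun ζ => β ζ * β (c - ζ)) =ᶠ[𝓝 ξ] fun _ => 1)
    (hρ : (fun ζ => (ρ (c - ζ) - 1) * β ζ) =ᶠ[𝓝 ξ] fun ζ => ρ ζ - 1)
    (hρc : DifferentiableAt ℝ ρ (c - ξ)) (hd : deriv β ξ ≠ 0) (hdc : deriv β (c - ξ) ≠ 0) :
    ρ ξ - β ξ * (deriv ρ ξ / deriv β ξ) = 1 + deriv ρ (c - ξ) / deriv β (c - ξ) := by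
  have hβξ := differentiableAt_of_deriv_ne_zero hd
  have hβc : DifferentiableAt ℝ (fun ζ => β (c - ζ)) ξ :=
    (differentiableAt_of_deriv_ne_zero hdc).comp ξ (differentiableAt_id.const_sub c)
  have hρc' : DifferentiableAt ℝ (fun ζ => ρ (c - ζ) - 1) ξ :=
    (hρc.comp ξ (differentiableAt_id.const_sub c)).sub_const 1
  have dβ : deriv β ξ * β (c - ξ) + β ξ * -deriv β (c - ξ) = 0 := by
    simpa [deriv_fun_mul hβξ hβc, deriv_comp_const_sub] using hβ.deriv_eq
  have dρ : -deriv ρ (c - ξ) * β ξ + (ρ (c - ξ) - 1) * deriv β ξ = deriv ρ ξ := by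
    simpa [deriv_fun_mul hρc' hβξ, deriv_comp_const_sub] using hρ.deriv_eq
  have hβ₀ := hβ.self_of_nhds
  have hρ₀ := hρ.self_of_nhds
  have hβξ₀ : β ξ ≠ 0 := left_ne_zero_of_mul_eq_one hβ₀
  field_simp
  linear_combination (β ξ * deriv β (c - ξ)) * dρ - (deriv β ξ * deriv β (c - ξ)) * hρ₀
    - (deriv ρ (c - ξ) * β ξ) * dβ + (deriv ρ (c - ξ) * deriv β ξ) * hβ₀

theorem Real.cot_add_cot {a b : ℝ} (ha : sin a ≠ 0) (hb : sin b ≠ 0) :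
    cot a + cot b = sin (a + b) / (sin a * sin b) := by
  rw [cot_eq_cos_div_sin, cot_eq_cos_div_sin, sin_add]
  field_simp
  ring

noncomputable def arcticBeta (η ζ : ℝ) : ℝ :=
  sin (2*η + ζ) * sin (2*η - ζ) / (sin ζ * sin (4*η - ζ))

noncomputable def arcticRho (η α ζ : ℝ) : ℝ :=
  (α*(cot (α*ζ) + cot (α*(2*η - ζ))) - cot ζ - cot (4*η - ζ))
    * (sin (ζ + 2*η) * sin (2*η - ζ) / sin (4*η))

section Reflection

variable {η α ζ : ℝ}

theorem two_mul_sub_mem_Ioo (hζ : ζ ∈ Ioo 0 (2*η)) : 2*η - ζ ∈ Ioo 0 (2*η) :=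
  ⟨by linarith [hζ.2], by linarith [hζ.1]⟩

theorem sin_pos_of_mem_Ioo_zero_two_mul (hη : η < π/4) (hζ : ζ ∈ Ioo 0 (2*η)) :
    0 < sin ζ ∧ 0 < sin (2*η - ζ) ∧ 0 < sin (2*η + ζ) ∧ 0 < sin (4*η - ζ) ∧ 0 < sin (4*η) := by
  obtain ⟨h0, h2η⟩ := hζ
  refine ⟨?_, ?_, ?_, ?_, ?_⟩ <;> apply sin_pos_of_pos_of_lt_pi <;> linarith

theorem mul_mem_Ioo_zero_pi (hη : η < π/4) (hα : α = π / (π - 2*η)) (hζ : ζ ∈ Ioo 0 (2*η)) :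
    α * ζ ∈ Ioo 0 π := by
  obtain ⟨hζ0, hζ2η⟩ := hζ
  have hπ : 0 < π - 2*η := by linarith [pi_gt_three]
  refine ⟨mul_pos (hα ▸ div_pos pi_pos hπ) hζ0, ?_⟩
  rw [hα, div_mul_eq_mul_div, div_lt_iff₀ hπ]
  nlinarith [pi_pos]

theorem arcticBeta_mul_arcticBeta_two_mul_sub (hη : η < π/4) (hζ : ζ ∈ Ioo 0 (2*η)) :
    arcticBeta η ζ * arcticBeta η (2*η - ζ) = 1 := by
  obtain ⟨h₁, h₂, h₃, h₄, -⟩ := sin_pos_of_mem_Ioo_zero_two_mul hη hζ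
  rw [arcticBeta, arcticBeta, sub_sub_cancel, show 4*η - (2*η - ζ) = 2*η + ζ by ring,
    show 2*η + (2*η - ζ) = 4*η - ζ by ring, div_mul_div_comm, div_eq_one_iff_eq (by positivity)]
  ring

theorem arcticRho_add_arcticBeta (hη : η < π/4) (hζ : ζ ∈ Ioo 0 (2*η)) :
    arcticRho η α ζ + arcticBeta η ζ =
      α*(cot (α*ζ) + cot (α*(2*η - ζ))) * (sin (ζ + 2*η) * sin (2*η - ζ) / sin (4*η)) := by
  obtain ⟨h₁, -, -, h₄, h4η⟩ := sin_pos_of_mem_Ioo_zero_two_mul hη hζ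
  have hcot := cot_add_cot h₁.ne' h₄.ne'
  rw [add_sub_cancel] at hcot
  rw [arcticRho, arcticBeta, sub_sub, hcot, sub_mul, div_mul_div_cancel₀' h4η.ne', add_comm ζ,
    sub_add_cancel]

theorem arcticRho_two_mul_sub_sub_one_mul (hη : η < π/4) (hζ : ζ ∈ Ioo 0 (2*η)) :
    (arcticRho η α (2*η - ζ) - 1) * arcticBeta η ζ = arcticRho η α ζ - 1 := by
  obtain ⟨h₁, -, -, h₄, -⟩ := sin_pos_of_mem_Ioo_zero_two_mul hη hζ
  have hρ := arcticRho_add_arcticBeta (α := α) hη hζ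
  have hρ' := arcticRho_add_arcticBeta (α := α) hη (two_mul_sub_mem_Ioo hζ)
  rw [sub_sub_cancel, show 2*η - ζ + 2*η = 4*η - ζ by ring, add_comm (cot _)] at hρ'
  have hβ : arcticBeta η ζ * (sin ζ * sin (4*η - ζ) / sin (4*η)) =
      sin (ζ + 2*η) * sin (2*η - ζ) / sin (4*η) := by
    rw [arcticBeta, div_mul_div_cancel₀ (by positivity), add_comm ζ]
  linear_combination arcticBeta η ζ * hρ' - hρ - arcticBeta_mul_arcticBeta_two_mul_sub hη hζ
    + α*(cot (α*ζ) + cot (α*(2*η - ζ))) * hβ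

theorem differentiableAt_arcticRho (hη : η < π/4) (hα : α = π / (π - 2*η))
    (hζ : ζ ∈ Ioo 0 (2*η)) : DifferentiableAt ℝ (arcticRho η α) ζ := by
  have h₁ := sin_pos_of_mem_Ioo (mul_mem_Ioo_zero_pi hη hα hζ)
  have h₂ := sin_pos_of_mem_Ioo (mul_mem_Ioo_zero_pi hη hα (two_mul_sub_mem_Ioo hζ))
  obtain ⟨h₃, -, -, h₄, -⟩ := sin_pos_of_mem_Ioo_zero_two_mul hη hζ
  unfold arcticRho
  simp only [cot_eq_cos_div_sin]
  fun_prop (disch := positivity)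

end Reflection

theorem stmt18_general (η : ℝ) (h2 : η < Real.pi/4)
    (α : ℝ) (hα : α = Real.pi / (Real.pi - 2*η))
    (ρ β : ℝ → ℝ)
    (hρ : ρ = fun ζ => (α*(Real.cot (α*ζ) + Real.cot (α*(2*η - ζ))) - Real.cot ζ
        - Real.cot (4*η - ζ))
        * (Real.sin (ζ + 2*η) * Real.sin (2*η - ζ) / Real.sin (4*η)))
    (hβ : β = fun ζ => Real.sin (2*η + ζ) * Real.sin (2*η - ζ)
        / (Real.sin ζ * Real.sin (4*η - ζ)))
    (ξ : ℝ) (hξ : ξ ∈ Set.Ioo 0 (2*η))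
    (hd1 : deriv β ξ ≠ 0) (hd2 : deriv β (2*η - ξ) ≠ 0) :
    ρ ξ - β ξ * (deriv ρ ξ / deriv β ξ) = 1 + deriv ρ (2*η - ξ) / deriv β (2*η - ξ) := by
  subst hρ hβ
  have hU : Ioo 0 (2*η) ∈ 𝓝 ξ := Ioo_mem_nhds hξ.1 hξ.2
  refine sub_mul_deriv_div_eq_one_add_deriv_div (ρ := arcticRho η α) (β := arcticBeta η) ?_ ?_
    (differentiableAt_arcticRho h2 hα (two_mul_sub_mem_Ioo hξ)) hd1 hd2
  · exact eventually_of_mem hU fun ζ hζ => arcticBeta_mul_arcticBeta_two_mul_sub h2 hζ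
  · exact eventually_of_mem hU fun ζ hζ => arcticRho_two_mul_sub_sub_one_mul h2 hζ

/-- The x ↔ y symmetry x(ξ) = y(2η−ξ) of the QTHADT arctic curve. -/
theorem stmt18 (η : ℝ) (h1 : 0 < η) (h2 : η < Real.pi/4)
    (α : ℝ) (hα : α = Real.pi / (Real.pi - 2*η))
    (ρ β : ℝ → ℝ)
    (hρ : ρ = fun ζ => (α*(Real.cot (α*ζ) + Real.cot (α*(2*η - ζ))) - Real.cot ζ
        - Real.cot (4*η - ζ))
        * (Real.sin (ζ + 2*η) * Real.sin (2*η - ζ) / Real.sin (4*η)))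
    (hβ : β = fun ζ => Real.sin (2*η + ζ) * Real.sin (2*η - ζ)
        / (Real.sin ζ * Real.sin (4*η - ζ)))
    (ξ : ℝ) (hξ : ξ ∈ Set.Ioo 0 (2*η))
    (hd1 : deriv β ξ ≠ 0) (hd2 : deriv β (2*η - ξ) ≠ 0) :
    ρ ξ - β ξ * (deriv ρ ξ / deriv β ξ) = 1 + deriv ρ (2*η - ξ) / deriv β (2*η - ξ) :=
  stmt18_general η h2 α hα ρ β hρ hβ ξ hξ hd1 hd2
end
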